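/- arXiv:2306.06878 — 8 statements merged into one kernel-verified Lean document; each statement's English description precedes it below -/
import Mathlib

section
/- Let V be a finite type and let E be a Fitch graph on V. Let G be the relation obtained from E by removing all bidirectional edges, i.e., G x y holds if and only if E x y holds and E y x does not. Then G is acyclic, i.e., the transitive closure of G is irreflexive. -/
/-- `IsFitchOn E S` : the digraph `E` is a Fitch graph on the vertex set `S`. -/
inductive IsFitchOn {V : Type*} (E : V → V → Prop) : Set V → Prop where
  | edgeless (S : Set V) (h : ∀ x ∈ S, ∀ y ∈ S, ¬ E x y) : IsFitchOn E S
  | join (A B : Set V) (hdisj : Disjoint A B) (hA : A.Nonempty) (hB : B.Nonempty)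
      (fA : IsFitchOn E A) (fB : IsFitchOn E B)
      (h : ∀ a ∈ A, ∀ b ∈ B, E a b ∧ E b a) : IsFitchOn E (A ∪ B)
  | dirJoin (A B : Set V) (hdisj : Disjoint A B) (hA : A.Nonempty) (hB : B.Nonempty)
      (hAedgeless : ∀ x ∈ A, ∀ y ∈ A, ¬ E x y) (fB : IsFitchOn E B)
      (h : ∀ a ∈ A, ∀ b ∈ B, E a b ∧ ¬ E b a) : IsFitchOn E (A ∪ B)

private theorem fitch_aux {V : Type*} (E : V → V → Prop) :
    ∀ S : Set V, IsFitchOn E S →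
      ∀ x, ¬ Relation.TransGen (fun a b => a ∈ S ∧ b ∈ S ∧ E a b ∧ ¬ E b a) x x := by
  intro S hS
  induction hS with
  | edgeless S h =>
    intro x hx
    cases hx with
    | single h' => exact h _ h'.1 _ h'.2.1 h'.2.2.1
    | tail _ h' => exact h _ h'.1 _ h'.2.1 h'.2.2.1
  | join A B hdisj hA hB fA fB h ihA ihB =>
    intro x hx
    have step : ∀ a b, (a ∈ A ∪ B ∧ b ∈ A ∪ B ∧ E a b ∧ ¬ E b a) →
        (a ∈ A ∧ b ∈ A ∧ (a ∈ A ∧ b ∈ A ∧ E a b ∧ ¬ E b a)) ∨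
        (a ∈ B ∧ b ∈ B ∧ (a ∈ B ∧ b ∈ B ∧ E a b ∧ ¬ E b a)) := by
      rintro a b ⟨ha, hb, hab, hnba⟩
      rcases ha with ha | ha <;> rcases hb with hb | hb
      · exact Or.inl ⟨ha, hb, ha, hb, hab, hnba⟩
      · exact absurd (h a ha b hb).2 hnba
      · exact absurd (h b hb a ha).1 hnba
      · exact Or.inr ⟨ha, hb, ha, hb, hab, hnba⟩
    have key : ∀ a b, Relation.TransGen
        (fun a b => a ∈ A ∪ B ∧ b ∈ A ∪ B ∧ E a b ∧ ¬ E b a) a b →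
        (a ∈ A ∧ b ∈ A ∧ Relation.TransGen (fun a b => a ∈ A ∧ b ∈ A ∧ E a b ∧ ¬ E b a) a b) ∨
        (a ∈ B ∧ b ∈ B ∧ Relation.TransGen (fun a b => a ∈ B ∧ b ∈ B ∧ E a b ∧ ¬ E b a) a b) := by
      intro a b hab
      induction hab with
      | single h' =>
        rcases step _ _ h' with ⟨h1, h2, h3⟩ | ⟨h1, h2, h3⟩
        · exact Or.inl ⟨h1, h2, Relation.TransGen.single h3⟩
        · exact Or.inr ⟨h1, h2, Relation.TransGen.single h3⟩
      | tail _ h' ih =>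
        rcases ih with ⟨h1, h2, h3⟩ | ⟨h1, h2, h3⟩ <;>
          rcases step _ _ h' with ⟨g1, g2, g3⟩ | ⟨g1, g2, g3⟩
        · exact Or.inl ⟨h1, g2, h3.tail g3⟩
        · exact (Set.disjoint_left.mp hdisj h2 g1).elim
        · exact (Set.disjoint_left.mp hdisj g1 h2).elim
        · exact Or.inr ⟨h1, g2, h3.tail g3⟩
    rcases key _ _ hx with ⟨_, _, h3⟩ | ⟨_, _, h3⟩
    · exact ihA x h3
    · exact ihB x h3
  | dirJoin A B hdisj hA hB hAe fB h ihB =>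
    intro x hx
    have step : ∀ a b, (a ∈ A ∪ B ∧ b ∈ A ∪ B ∧ E a b ∧ ¬ E b a) →
        (a ∈ B ∧ b ∈ B ∧ (a ∈ B ∧ b ∈ B ∧ E a b ∧ ¬ E b a)) ∨ (a ∈ A ∧ b ∈ B) := by
      rintro a b ⟨ha, hb, hab, hnba⟩
      rcases ha with ha | ha <;> rcases hb with hb | hb
      · exact absurd hab (hAe a ha b hb)
      · exact Or.inr ⟨ha, hb⟩
      · exact absurd hab (h b hb a ha).2
      · exact Or.inl ⟨ha, hb, ha, hb, hab, hnba⟩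
    have key : ∀ a b, Relation.TransGen
        (fun a b => a ∈ A ∪ B ∧ b ∈ A ∪ B ∧ E a b ∧ ¬ E b a) a b →
        (a ∈ B ∧ b ∈ B ∧ Relation.TransGen (fun a b => a ∈ B ∧ b ∈ B ∧ E a b ∧ ¬ E b a) a b) ∨
        (a ∈ A ∧ b ∈ B) := by
      intro a b hab
      induction hab with
      | single h' =>
        rcases step _ _ h' with ⟨h1, h2, h3⟩ | ⟨h1, h2⟩
        · exact Or.inl ⟨h1, h2, Relation.TransGen.single h3⟩
        · exact Or.inr ⟨h1, h2⟩
      | tail _ h' ih =>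
        rcases ih with ⟨h1, h2, h3⟩ | ⟨h1, h2⟩ <;>
          rcases step _ _ h' with ⟨g1, g2, g3⟩ | ⟨g1, g2⟩
        · exact Or.inl ⟨h1, g2, h3.tail g3⟩
        · exact (Set.disjoint_left.mp hdisj g1 h2).elim
        · exact Or.inr ⟨h1, g2⟩
        · exact (Set.disjoint_left.mp hdisj g1 h2).elim
    rcases key _ _ hx with ⟨_, _, h3⟩ | ⟨h1, h2⟩
    · exact ihB x h3
    · exact Set.disjoint_left.mp hdisj h1 h2

/-- Removing all bidirectional edges from a Fitch graph yields a DAG. -/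
theorem fitch_remove_bidirectional_acyclic {V : Type*} [Fintype V]
    (E : V → V → Prop) (hirr : Irreflexive E) (hE : IsFitchOn E Set.univ) :
    Irreflexive (Relation.TransGen (fun x y => E x y ∧ ¬ E y x)) := by
  intro x hx
  refine fitch_aux E Set.univ hE x (Relation.TransGen.mono ?_ _ _ hx)
  intro a b hab
  exact ⟨trivial, trivial, hab⟩
end

section
/- Let V be a finite type and let E be an irreflexive relation on V such that every pair of distinct vertices is adjacent (for all distinct x, y, E x y or E y x holds) and E has no bidirectional edges (there is no pair x, y with both E x y and E y x). Then E is a Fitch graph on V if and only if E is acyclic. -/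
/-- Restriction of a relation to a set. -/
def restrRel {V : Type*} (E : V → V → Prop) (S : Set V) : V → V → Prop :=
  fun a b => a ∈ S ∧ b ∈ S ∧ E a b

lemma stay_in {V : Type*} (E : V → V → Prop) (S B : Set V)
    (hclosed : ∀ b ∈ B, ∀ c ∈ S, E b c → c ∈ B) :
    ∀ x y, Relation.TransGen (restrRel E S) x y → x ∈ B →
      y ∈ B ∧ Relation.TransGen (restrRel E B) x y := by
  intro x y h hx
  induction h with
  | single h1 =>
    obtain ⟨hxS, hyS, hE⟩ := h1
    have hyB := hclosed x hx _ hyS hE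
    exact ⟨hyB, Relation.TransGen.single ⟨hx, hyB, hE⟩⟩
  | tail h1 h2 ih =>
    obtain ⟨hbB, htg⟩ := ih
    obtain ⟨hbS, hcS, hE⟩ := h2
    have hcB := hclosed _ hbB _ hcS hE
    exact ⟨hcB, htg.tail ⟨hbB, hcB, hE⟩⟩

lemma fitch_acyclic {V : Type*} (E : V → V → Prop)
    (hnobi : ∀ x y : V, ¬ (E x y ∧ E y x)) {S : Set V} (hf : IsFitchOn E S) :
    ∀ x, ¬ Relation.TransGen (restrRel E S) x x := by
  induction hf with
  | edgeless S h =>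
    intro x hx
    obtain ⟨b, _, hbc⟩ := Relation.TransGen.tail'_iff.mp hx
    exact h _ hbc.1 _ hbc.2.1 hbc.2.2
  | join A B hdisj hA hB fA fB h ihA ihB =>
    intro x _
    obtain ⟨a, ha⟩ := hA
    obtain ⟨b, hb⟩ := hB
    exact hnobi a b (h a ha b hb)
  | dirJoin A B hdisj hA hB hAedgeless fB h ih =>
    have hclosed : ∀ b ∈ B, ∀ c ∈ A ∪ B, E b c → c ∈ B := by
      intro b hb c hc hE
      rcases hc with hcA | hcB
      · exact absurd hE (h c hcA b hb).2
      · exact hcB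
    intro x hx
    by_cases hxB : x ∈ B
    · exact ih x (stay_in E (A ∪ B) B hclosed x x hx hxB).2
    · obtain ⟨c, h1, h2⟩ := Relation.TransGen.head'_iff.mp hx
      obtain ⟨hxS, hcS, hE⟩ := h1
      have hxA : x ∈ A := hxS.resolve_right hxB
      have hcB : c ∈ B := by
        rcases hcS with hcA | hcB
        · exact absurd hE (hAedgeless x hxA c hcA)
        · exact hcB
      rcases Relation.reflTransGen_iff_eq_or_transGen.mp h2 with rfl | h3
      · exact hxB hcB
      · exact hxB (stay_in E (A ∪ B) B hclosed c x h3 hcB).1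

/-- A digraph with no non-adjacent pairs of vertices and no bidirectional edges is a
Fitch graph if and only if it is a DAG. -/
theorem fitch_iff_acyclic_of_tournament {V : Type*} [Fintype V]
    (E : V → V → Prop) (hirr : Irreflexive E)
    (hadj : ∀ x y : V, x ≠ y → E x y ∨ E y x)
    (hnobi : ∀ x y : V, ¬ (E x y ∧ E y x)) :
    IsFitchOn E Set.univ ↔ Irreflexive (Relation.TransGen E) := by
  constructor
  · intro hf x hx
    have : Relation.TransGen (restrRel E Set.univ) x x := by
      refine Relation.TransGen.mono ?_ x x hx
      intro a b hab
      exact ⟨trivial, trivial, hab⟩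
    exact fitch_acyclic E hnobi hf x this
  · intro hacyc
    have hwf : WellFounded (Relation.TransGen E) := by
      haveI : IsTrans V (Relation.TransGen E) := ⟨fun a b c => Relation.TransGen.trans⟩
      haveI : IsIrrefl V (Relation.TransGen E) := ⟨hacyc⟩
      exact Finite.wellFounded_of_trans_of_irrefl _
    haveI := Classical.decEq V
    have key : ∀ s : Finset V, IsFitchOn E ↑s := by
      intro s
      induction s using Finset.strongInduction with
      | _ s ih =>
        rcases s.eq_empty_or_nonempty with rfl | hne
        · exact .edgeless _ (by simp)
        · obtain ⟨a, haS, hmin⟩ := hwf.has_min ↑s (by exact_mod_cast hne)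
          by_cases hsingle : s = {a}
          · subst hsingle
            refine .edgeless _ ?_
            intro x hx y hy
            simp only [Finset.coe_singleton, Set.mem_singleton_iff] at hx hy
            subst hx; subst hy
            exact hirr _
          · have hB : (s.erase a).Nonempty := by
              rw [Finset.erase_nonempty haS]
              rcases hne.exists_eq_singleton_or_nontrivial with ⟨b, hb⟩ | h
              · have haS' : a ∈ s := by exact_mod_cast haS
                rw [hb, Finset.mem_singleton] at haS'
                exact absurd (by rw [hb, haS']) hsingle
              · exact h
            have fB := ih (s.erase a) (Finset.erase_ssubset haS)
            have hdisj : Disjoint ({a} : Set V) ↑(s.erase a) := by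
              simp
            have hkey : ∀ b ∈ s.erase a, E a b ∧ ¬ E b a := by
              intro b hb
              have hbs := Finset.mem_of_mem_erase hb
              have hne' : b ≠ a := Finset.ne_of_mem_erase hb
              have hnEba : ¬ E b a := fun hE =>
                hmin b (by exact_mod_cast hbs) (Relation.TransGen.single hE)
              have hEab : E a b := (hadj a b hne'.symm).resolve_right hnEba
              exact ⟨hEab, hnEba⟩
            have hfit := IsFitchOn.dirJoin {a} ↑(s.erase a) hdisj
              (Set.singleton_nonempty a) (by exact_mod_cast hB)
              (by intro x hx y hy
                  simp only [Set.mem_singleton_iff] at hx hy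
                  subst hx; subst hy; exact hirr _)
              fB
              (by intro x hx b hb
                  simp only [Set.mem_singleton_iff] at hx
                  subst hx
                  exact hkey b (by exact_mod_cast hb))
            have : ({a} : Set V) ∪ ↑(s.erase a) = ↑s := by
              rw [← Finset.coe_singleton, ← Finset.coe_union]
              rw [← Finset.insert_eq, Finset.insert_erase haS]
            rwa [this] at hfit
    have := key Finset.univ
    rwa [Finset.coe_univ] at this
end

section
/- Being a Fitch graph is a hereditary property: if V is a finite type, E is a Fitch graph on a finite set S ⊆ V, and W ⊆ S, then E is a Fitch graph on W. -/
/-- Being a Fitch graph is hereditary. -/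
theorem isFitchOn_hereditary {V : Type*} [Fintype V]
    (E : V → V → Prop) (hirr : Irreflexive E) (S W : Set V)
    (hE : IsFitchOn E S) (hWS : W ⊆ S) :
    IsFitchOn E W := by
  induction hE generalizing W with
  | edgeless S h =>
    exact .edgeless W (fun x hx y hy => h x (hWS hx) y (hWS hy))
  | join A B hdisj hA hB fA fB h ihA ihB =>
    have hsplit : W = (W ∩ A) ∪ (W ∩ B) := by
      rw [← Set.inter_union_distrib_left, Set.inter_eq_left.mpr hWS]
    by_cases hWA : (W ∩ A).Nonempty
    · by_cases hWB : (W ∩ B).Nonempty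
      · rw [hsplit]
        exact .join _ _ (hdisj.mono Set.inter_subset_right Set.inter_subset_right)
          hWA hWB (ihA _ Set.inter_subset_right) (ihB _ Set.inter_subset_right)
          (fun a ha b hb => h a ha.2 b hb.2)
      · have : W ⊆ A := by
          intro x hx
          rcases hWS hx with hxa | hxb
          · exact hxa
          · exact (hWB (Set.nonempty_of_mem (Set.mem_inter hx hxb))).elim
        exact ihA _ this
    · have : W ⊆ B := by
        intro x hx
        rcases hWS hx with hxa | hxb
        · exact (hWA (Set.nonempty_of_mem (Set.mem_inter hx hxa))).elim
        · exact hxb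
      exact ihB _ this
  | dirJoin A B hdisj hA hB hAedge fB h ihB =>
    have hsplit : W = (W ∩ A) ∪ (W ∩ B) := by
      rw [← Set.inter_union_distrib_left, Set.inter_eq_left.mpr hWS]
    by_cases hWA : (W ∩ A).Nonempty
    · by_cases hWB : (W ∩ B).Nonempty
      · rw [hsplit]
        exact .dirJoin _ _ (hdisj.mono Set.inter_subset_right Set.inter_subset_right)
          hWA hWB (fun x hx y hy => hAedge x hx.2 y hy.2) (ihB _ Set.inter_subset_right)
          (fun a ha b hb => h a ha.2 b hb.2)
      · have hsub : W ⊆ A := by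
          intro x hx
          rcases hWS hx with hxa | hxb
          · exact hxa
          · exact (hWB (Set.nonempty_of_mem (Set.mem_inter hx hxb))).elim
        exact .edgeless W (fun x hx y hy => hAedge x (hsub hx) y (hsub hy))
    · have hsub : W ⊆ B := by
        intro x hx
        rcases hWS hx with hxa | hxb
        · exact (hWA (Set.nonempty_of_mem (Set.mem_inter hx hxa))).elim
        · exact hxb
      exact ihB _ hsub
end

section
/- Every Fitch graph is a di-cograph: if V is a finite type, S ⊆ V is a nonempty finite set, and E is a Fitch graph on S, then E is a di-cograph on S. -/
/-- `IsDiCographOn E S` : the digraph `E` is a di-cograph on the vertex set `S`. -/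
inductive IsDiCographOn {V : Type*} (E : V → V → Prop) : Set V → Prop where
  | single (x : V) : IsDiCographOn E {x}
  | union (A B : Set V) (hdisj : Disjoint A B) (hA : A.Nonempty) (hB : B.Nonempty)
      (dA : IsDiCographOn E A) (dB : IsDiCographOn E B)
      (h : ∀ a ∈ A, ∀ b ∈ B, ¬ E a b ∧ ¬ E b a) : IsDiCographOn E (A ∪ B)
  | join (A B : Set V) (hdisj : Disjoint A B) (hA : A.Nonempty) (hB : B.Nonempty)
      (dA : IsDiCographOn E A) (dB : IsDiCographOn E B)
      (h : ∀ a ∈ A, ∀ b ∈ B, E a b ∧ E b a) : IsDiCographOn E (A ∪ B)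
  | dirJoin (A B : Set V) (hdisj : Disjoint A B) (hA : A.Nonempty) (hB : B.Nonempty)
      (dA : IsDiCographOn E A) (dB : IsDiCographOn E B)
      (h : ∀ a ∈ A, ∀ b ∈ B, E a b ∧ ¬ E b a) : IsDiCographOn E (A ∪ B)


private lemma edgeless_dicograph {V : Type*} (E : V → V → Prop) (s : Finset V)
    (hs : s.Nonempty) (h : ∀ x ∈ s, ∀ y ∈ s, ¬ E x y) :
    IsDiCographOn E (↑s : Set V) := by
  induction hs using Finset.Nonempty.cons_induction with
  | singleton a => rw [Finset.coe_singleton]; exact IsDiCographOn.single a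
  | cons a t ha ht ih =>
      have : ((Finset.cons a t ha : Finset V) : Set V) = {a} ∪ (↑t : Set V) := by
        ext y; simp [Finset.mem_cons, or_comm]
      rw [this]
      refine IsDiCographOn.union {a} (↑t) ?_ ⟨a, rfl⟩ (by exact_mod_cast ht) ?_ ?_ ?_
      · simp [Set.disjoint_singleton_left, ha]
      · exact IsDiCographOn.single a
      · exact ih (fun x hx y hy => h x (by simp [hx]) y (by simp [hy]))
      · intro x hx b hb
        rcases hx with rfl
        have hb' : b ∈ t := by exact_mod_cast hb
        exact ⟨h x (by simp) b (by simp [hb']), h b (by simp [hb']) x (by simp)⟩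

private lemma edgeless_dicograph' {V : Type*} [Fintype V] (E : V → V → Prop) (S : Set V)
    (hS : S.Nonempty) (h : ∀ x ∈ S, ∀ y ∈ S, ¬ E x y) :
    IsDiCographOn E S := by
  have hfin : S.Finite := Set.toFinite S
  have := edgeless_dicograph E hfin.toFinset (by simpa [Set.Finite.toFinset_nonempty])
    (fun x hx y hy => h x (by simpa using hx) y (by simpa using hy))
  simpa using this

/-- Every Fitch graph is a di-cograph. -/
theorem isDiCographOn_of_isFitchOn {V : Type*} [Fintype V]
    (E : V → V → Prop) (hirr : Irreflexive E) (S : Set V) (hS : S.Nonempty)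
    (hE : IsFitchOn E S) :
    IsDiCographOn E S := by
  induction hE with
  | edgeless S h => exact edgeless_dicograph' E S hS h
  | join A B hdisj hA hB fA fB h ihA ihB =>
      exact IsDiCographOn.join A B hdisj hA hB (ihA hA) (ihB hB) h
  | dirJoin A B hdisj hA hB hAedgeless fB h ihB =>
      exact IsDiCographOn.dirJoin A B hdisj hA hB
        (edgeless_dicograph' E A hA hAedgeless) (ihB hB) h
end

section
/- Fitch-satisfiability is hereditary: a partial tuple 𝓔 = (E0, E1, E→) on a finite vertex set V is Fitch-satisfiable if and only if 𝓔[W] is Fitch-satisfiable for every subset W ⊆ V. -/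
/-- A (partial) tuple of relations: all irreflexive, the first two symmetric,
the third antisymmetric. -/
def IsPartialTuple {V : Type*} (E0 E1 Er : V → V → Prop) : Prop :=
  Irreflexive E0 ∧ Irreflexive E1 ∧ Irreflexive Er ∧
    Symmetric E0 ∧ Symmetric E1 ∧ ∀ x y : V, Er x y → ¬ Er y x

/-- A tuple of relations is full if the relations are pairwise disjoint and every
pair of distinct vertices is in one of them (in some direction). -/
def IsFullTriple {V : Type*} (F0 F1 Fr : V → V → Prop) : Prop :=
  (∀ x y : V, ¬ (F0 x y ∧ F1 x y)) ∧ (∀ x y : V, ¬ (F0 x y ∧ Fr x y)) ∧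
    (∀ x y : V, ¬ (F1 x y ∧ Fr x y)) ∧
    ∀ x y : V, x ≠ y → F0 x y ∨ F1 x y ∨ Fr x y ∨ Fr y x

/-- The partial tuple `(E0, E1, Er)` is Fitch-satisfiable: some full tuple extending it
has `E1* ∪ E→*` a Fitch graph on the whole vertex set. -/
def FitchSat {V : Type*} (E0 E1 Er : V → V → Prop) : Prop :=
  ∃ F0 F1 Fr : V → V → Prop,
    IsPartialTuple F0 F1 Fr ∧ IsFullTriple F0 F1 Fr ∧
    (∀ x y, E0 x y → F0 x y) ∧ (∀ x y, E1 x y → F1 x y) ∧ (∀ x y, Er x y → Fr x y) ∧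
    IsFitchOn (fun x y => F1 x y ∨ Fr x y) Set.univ

/-- Restriction of a relation on `V` to a subset `W ⊆ V`. -/
def restrictRel {V : Type*} (E : V → V → Prop) (W : Set V) : W → W → Prop :=
  fun x y => E x.1 y.1

lemma isFitchOn_mono {V : Type*} {E : V → V → Prop} {S : Set V} (h : IsFitchOn E S) :
    ∀ T ⊆ S, IsFitchOn E T := by
  induction h with
  | edgeless S h =>
    intro T hT
    exact IsFitchOn.edgeless T (fun x hx y hy => h x (hT hx) y (hT hy))
  | join A B hdisj hA hB fA fB h ihA ihB =>
    intro T hT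
    rcases (T ∩ A).eq_empty_or_nonempty with hTA | hTA
    · apply ihB
      intro x hx
      rcases hT hx with hxA | hxB
      · exact absurd (Set.mem_inter hx hxA) (by simp [hTA])
      · exact hxB
    · rcases (T ∩ B).eq_empty_or_nonempty with hTB | hTB
      · apply ihA
        intro x hx
        rcases hT hx with hxA | hxB
        · exact hxA
        · exact absurd (Set.mem_inter hx hxB) (by simp [hTB])
      · have hsplit : T = (T ∩ A) ∪ (T ∩ B) := by
          ext x; constructor
          · intro hx; rcases hT hx with h1 | h1
            · exact Or.inl ⟨hx, h1⟩
            · exact Or.inr ⟨hx, h1⟩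
          · rintro (⟨h1, _⟩ | ⟨h1, _⟩) <;> exact h1
        rw [hsplit]
        exact IsFitchOn.join _ _ (hdisj.mono Set.inter_subset_right Set.inter_subset_right)
          hTA hTB (ihA _ Set.inter_subset_right) (ihB _ Set.inter_subset_right)
          (fun a ha b hb => h a ha.2 b hb.2)
  | dirJoin A B hdisj hA hB hAe fB h ihB =>
    intro T hT
    rcases (T ∩ A).eq_empty_or_nonempty with hTA | hTA
    · apply ihB
      intro x hx
      rcases hT hx with hxA | hxB
      · exact absurd (Set.mem_inter hx hxA) (by simp [hTA])
      · exact hxB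
    · rcases (T ∩ B).eq_empty_or_nonempty with hTB | hTB
      · refine IsFitchOn.edgeless T (fun x hx y hy => ?_)
        have hxA : x ∈ A := by
          rcases hT hx with h1 | h1
          · exact h1
          · exact absurd (Set.mem_inter hx h1) (by simp [hTB])
        have hyA : y ∈ A := by
          rcases hT hy with h1 | h1
          · exact h1
          · exact absurd (Set.mem_inter hy h1) (by simp [hTB])
        exact hAe x hxA y hyA
      · have hsplit : T = (T ∩ A) ∪ (T ∩ B) := by
          ext x; constructor
          · intro hx; rcases hT hx with h1 | h1
            · exact Or.inl ⟨hx, h1⟩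
            · exact Or.inr ⟨hx, h1⟩
          · rintro (⟨h1, _⟩ | ⟨h1, _⟩) <;> exact h1
        rw [hsplit]
        exact IsFitchOn.dirJoin _ _ (hdisj.mono Set.inter_subset_right Set.inter_subset_right)
          hTA hTB (fun x hx y hy => hAe x hx.2 y hy.2) (ihB _ Set.inter_subset_right)
          (fun a ha b hb => h a ha.2 b hb.2)

lemma isFitchOn_preimage {V : Type*} {E : V → V → Prop} {W : Set V} {T : Set V}
    (h : IsFitchOn E T) (hTW : T ⊆ W) :
    IsFitchOn (restrictRel E W) ((Subtype.val : W → V) ⁻¹' T) := by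
  revert hTW
  induction h with
  | edgeless S h =>
    intro _
    exact IsFitchOn.edgeless _ (fun x hx y hy => h x.1 hx y.1 hy)
  | join A B hdisj hA hB fA fB h ihA ihB =>
    intro hTW
    have hAW : A ⊆ W := Set.subset_union_left.trans hTW
    have hBW : B ⊆ W := Set.subset_union_right.trans hTW
    rw [Set.preimage_union]
    refine IsFitchOn.join _ _ (hdisj.preimage _) ?_ ?_ (ihA hAW) (ihB hBW)
      (fun a ha b hb => h a.1 ha b.1 hb)
    · obtain ⟨a, ha⟩ := hA; exact ⟨⟨a, hAW ha⟩, ha⟩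
    · obtain ⟨b, hb⟩ := hB; exact ⟨⟨b, hBW hb⟩, hb⟩
  | dirJoin A B hdisj hA hB hAe fB h ihB =>
    intro hTW
    have hAW : A ⊆ W := Set.subset_union_left.trans hTW
    have hBW : B ⊆ W := Set.subset_union_right.trans hTW
    rw [Set.preimage_union]
    refine IsFitchOn.dirJoin _ _ (hdisj.preimage _) ?_ ?_
      (fun x hx y hy => hAe x.1 hx y.1 hy) (ihB hBW)
      (fun a ha b hb => h a.1 ha b.1 hb)
    · obtain ⟨a, ha⟩ := hA; exact ⟨⟨a, hAW ha⟩, ha⟩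
    · obtain ⟨b, hb⟩ := hB; exact ⟨⟨b, hBW hb⟩, hb⟩

lemma isFitchOn_image {V : Type*} {E : V → V → Prop} {W : Set V} {S : Set W}
    (h : IsFitchOn (restrictRel E W) S) :
    IsFitchOn E ((Subtype.val : W → V) '' S) := by
  induction h with
  | edgeless S h =>
    refine IsFitchOn.edgeless _ ?_
    rintro x ⟨a, ha, rfl⟩ y ⟨b, hb, rfl⟩
    exact h a ha b hb
  | join A B hdisj hA hB fA fB h ihA ihB =>
    rw [Set.image_union]
    refine IsFitchOn.join _ _ (Set.disjoint_image_of_injective Subtype.val_injective hdisj)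
      (hA.image _) (hB.image _) ihA ihB ?_
    rintro a ⟨a', ha', rfl⟩ b ⟨b', hb', rfl⟩
    exact h a' ha' b' hb'
  | dirJoin A B hdisj hA hB hAe fB h ihB =>
    rw [Set.image_union]
    refine IsFitchOn.dirJoin _ _ (Set.disjoint_image_of_injective Subtype.val_injective hdisj)
      (hA.image _) (hB.image _) ?_ ihB ?_
    · rintro x ⟨a, ha, rfl⟩ y ⟨b, hb, rfl⟩
      exact hAe a ha b hb
    · rintro a ⟨a', ha', rfl⟩ b ⟨b', hb', rfl⟩
      exact h a' ha' b' hb'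
/-- Fitch-satisfiability is hereditary. -/
theorem fitchSat_hereditary {V : Type*} [Fintype V] (E0 E1 Er : V → V → Prop)
    (h : IsPartialTuple E0 E1 Er) :
    FitchSat E0 E1 Er ↔
      ∀ W : Set V, FitchSat (restrictRel E0 W) (restrictRel E1 W) (restrictRel Er W) := by
  constructor
  · rintro ⟨F0, F1, Fr, ⟨hi0, hi1, hir, hs0, hs1, har⟩,
      ⟨hd01, hd0r, hd1r, hfull⟩, he0, he1, her, hfitch⟩ W
    refine ⟨restrictRel F0 W, restrictRel F1 W, restrictRel Fr W,
      ⟨fun x => hi0 x.1, fun x => hi1 x.1, fun x => hir x.1,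
        fun _ _ hxy => hs0 hxy, fun _ _ hxy => hs1 hxy,
        fun x y hxy => har x.1 y.1 hxy⟩,
      ⟨fun x y => hd01 x.1 y.1, fun x y => hd0r x.1 y.1, fun x y => hd1r x.1 y.1,
        fun x y hne => hfull x.1 y.1 (fun he => hne (Subtype.ext he))⟩,
      fun x y hxy => he0 x.1 y.1 hxy, fun x y hxy => he1 x.1 y.1 hxy,
      fun x y hxy => her x.1 y.1 hxy, ?_⟩
    have h1 : IsFitchOn (fun x y => F1 x y ∨ Fr x y) W :=
      isFitchOn_mono hfitch W (Set.subset_univ W)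
    have h2 := isFitchOn_preimage (W := W) h1 (subset_refl W)
    have h3 : ((Subtype.val : W → V) ⁻¹' W) = Set.univ := by
      ext x; simp [x.2]
    rw [h3] at h2
    exact h2
  · intro hW
    obtain ⟨F0, F1, Fr, ⟨hi0, hi1, hir, hs0, hs1, har⟩,
      ⟨hd01, hd0r, hd1r, hfull⟩, he0, he1, her, hfitch⟩ := hW Set.univ
    refine ⟨fun x y => F0 ⟨x, trivial⟩ ⟨y, trivial⟩,
      fun x y => F1 ⟨x, trivial⟩ ⟨y, trivial⟩,
      fun x y => Fr ⟨x, trivial⟩ ⟨y, trivial⟩,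
      ⟨fun x => hi0 _, fun x => hi1 _, fun x => hir _,
        fun _ _ hxy => hs0 hxy, fun _ _ hxy => hs1 hxy,
        fun x y hxy => har _ _ hxy⟩,
      ⟨fun x y => hd01 _ _, fun x y => hd0r _ _, fun x y => hd1r _ _,
        fun x y hne => hfull ⟨x, trivial⟩ ⟨y, trivial⟩
          (fun he => hne (congrArg Subtype.val he))⟩,
      fun x y hxy => he0 ⟨x, trivial⟩ ⟨y, trivial⟩ hxy,
      fun x y hxy => he1 ⟨x, trivial⟩ ⟨y, trivial⟩ hxy,
      fun x y hxy => her ⟨x, trivial⟩ ⟨y, trivial⟩ hxy, ?_⟩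
    have h2 := isFitchOn_image
      (E := fun x y => F1 ⟨x, trivial⟩ ⟨y, trivial⟩ ∨ Fr ⟨x, trivial⟩ ⟨y, trivial⟩)
      (W := Set.univ) (S := Set.univ) hfitch
    have h3 : ((Subtype.val : ↥(Set.univ : Set V) → V) '' Set.univ) = Set.univ := by
      ext x; simp
    rw [h3] at h2
    exact h2
end

section
/- Sufficiency of rule (S3): let 𝓔 = (E0, E1, E→) be a partial tuple on a finite vertex set V such that the digraph G→ = (V, E0 ∪ E1 ∪ E→) has more than one strongly connected component, and there exists a strongly connected component C of G→ such that (i) the relation E1 ∪ E→ has no edge with both endpoints in C, (ii) there is no (E0 ∪ E1 ∪ E→)-edge from a vertex outside C to a vertex in C, and (iii) 𝓔[V∖C] is Fitch-satisfiable. Then 𝓔 is Fitch-satisfiable. -/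
/-- The edge relation of the digraph `G→ = (V, E0 ∪ E1 ∪ E→)`. -/
def GFRel {V : Type*} (E0 E1 Er : V → V → Prop) : V → V → Prop :=
  fun x y => E0 x y ∨ E1 x y ∨ Er x y

/-- The strongly connected component of `v` with respect to a relation `R`
(mutual reachability by directed `R`-paths). -/
def scc {V : Type*} (R : V → V → Prop) (v : V) : Set V :=
  {y | Relation.ReflTransGen R v y ∧ Relation.ReflTransGen R y v}

theorem fitch_congr {V : Type*} {E E' : V → V → Prop} {S : Set V}
    (h : IsFitchOn E S) (he : ∀ x ∈ S, ∀ y ∈ S, (E x y ↔ E' x y)) : IsFitchOn E' S := by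
  induction h with
  | edgeless S h =>
    exact .edgeless S fun x hx y hy hxy => h x hx y hy ((he x hx y hy).2 hxy)
  | join A B hd hA hB fA fB h ihA ihB =>
    exact .join A B hd hA hB
      (ihA fun x hx y hy => he x (Or.inl hx) y (Or.inl hy))
      (ihB fun x hx y hy => he x (Or.inr hx) y (Or.inr hy))
      (fun a ha b hb =>
        ⟨(he a (Or.inl ha) b (Or.inr hb)).1 (h a ha b hb).1,
         (he b (Or.inr hb) a (Or.inl ha)).1 (h a ha b hb).2⟩)
  | dirJoin A B hd hA hB hAe fB h ihB =>
    exact .dirJoin A B hd hA hB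
      (fun x hx y hy hxy => hAe x hx y hy ((he x (Or.inl hx) y (Or.inl hy)).2 hxy))
      (ihB fun x hx y hy => he x (Or.inr hx) y (Or.inr hy))
      (fun a ha b hb =>
        ⟨(he a (Or.inl ha) b (Or.inr hb)).1 (h a ha b hb).1,
         fun hba => (h a ha b hb).2 ((he b (Or.inr hb) a (Or.inl ha)).2 hba)⟩)

/-- Lift a relation on a subtype to the ambient type. -/
def liftRel {V : Type*} (W : Set V) (E : W → W → Prop) : V → V → Prop :=
  fun x y => ∃ hx : x ∈ W, ∃ hy : y ∈ W, E ⟨x, hx⟩ ⟨y, hy⟩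

theorem fitch_lift {V : Type*} {W : Set V} {E : W → W → Prop} {S : Set W}
    (h : IsFitchOn E S) : IsFitchOn (liftRel W E) (Subtype.val '' S) := by
  induction h with
  | edgeless S h =>
    refine .edgeless _ ?_
    rintro x ⟨a, ha, rfl⟩ y ⟨b, hb, rfl⟩ ⟨hx, hy, hE⟩
    exact h a ha b hb hE
  | join A B hd hA hB fA fB h ihA ihB =>
    rw [Set.image_union]
    refine .join _ _ ((Set.disjoint_image_iff Subtype.val_injective).2 hd)
      (hA.image _) (hB.image _) ihA ihB ?_
    rintro x ⟨a, ha, rfl⟩ y ⟨b, hb, rfl⟩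
    exact ⟨⟨a.2, b.2, (h a ha b hb).1⟩, ⟨b.2, a.2, (h a ha b hb).2⟩⟩
  | dirJoin A B hd hA hB hAe fB h ihB =>
    rw [Set.image_union]
    refine .dirJoin _ _ ((Set.disjoint_image_iff Subtype.val_injective).2 hd)
      (hA.image _) (hB.image _) ?_ ihB ?_
    · rintro x ⟨a, ha, rfl⟩ y ⟨b, hb, rfl⟩ ⟨hx, hy, hE⟩
      exact hAe a ha b hb hE
    · rintro x ⟨a, ha, rfl⟩ y ⟨b, hb, rfl⟩
      refine ⟨⟨a.2, b.2, (h a ha b hb).1⟩, ?_⟩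
      rintro ⟨hy, hx, hE⟩
      exact (h a ha b hb).2 hE

theorem fitchSat_aux {V : Type*} (E0 E1 Er : V → V → Prop)
    (hI0 : Irreflexive E0) (hI1 : Irreflexive E1) (hIr : Irreflexive Er)
    (hS0 : Symmetric E0) (hS1 : Symmetric E1)
    (C : Set V) (hCne : C.Nonempty) (hCcne : Cᶜ.Nonempty)
    (hin : ∀ x ∈ C, ∀ y ∈ C, ¬ (E1 x y ∨ Er x y))
    (hout : ∀ x ∉ C, ∀ y ∈ C, ¬ GFRel E0 E1 Er x y)
    (hsat : FitchSat (restrictRel E0 Cᶜ) (restrictRel E1 Cᶜ) (restrictRel Er Cᶜ)) :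
    FitchSat E0 E1 Er := by
  classical
  obtain ⟨F0', F1', Fr', ⟨hI0', hI1', hIr', hS0', hS1', hAr'⟩,
    ⟨hd01', hd0r', hd1r', hfull'⟩, ext0, ext1, extr, hfitch'⟩ := hsat
  refine ⟨fun x y => (x ∈ C ∧ y ∈ C ∧ x ≠ y) ∨ liftRel Cᶜ F0' x y,
          fun x y => liftRel Cᶜ F1' x y,
          fun x y => (x ∈ C ∧ y ∈ Cᶜ) ∨ liftRel Cᶜ Fr' x y,
          ⟨?_, ?_, ?_, ?_, ?_, ?_⟩, ⟨?_, ?_, ?_, ?_⟩, ?_, ?_, ?_, ?_⟩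
  · rintro x (⟨_, _, hne⟩ | ⟨hx, hy, hE⟩)
    · exact hne rfl
    · exact hI0' _ hE
  · rintro x ⟨hx, hy, hE⟩
    exact hI1' _ hE
  · rintro x (⟨hx, hy⟩ | ⟨hx, hy, hE⟩)
    · exact hy hx
    · exact hIr' _ hE
  · rintro x y (⟨hx, hy, hne⟩ | ⟨hx, hy, hE⟩)
    · exact Or.inl ⟨hy, hx, hne.symm⟩
    · exact Or.inr ⟨hy, hx, hS0' hE⟩
  · rintro x y ⟨hx, hy, hE⟩
    exact ⟨hy, hx, hS1' hE⟩
  · rintro x y (⟨hx, hy⟩ | ⟨hx, hy, hE⟩) (⟨hy', hx'⟩ | ⟨hy', hx', hE'⟩)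
    · exact hy hy'
    · exact hx' hx
    · exact hy hy'
    · exact hAr' _ _ hE hE'
  · rintro x y ⟨(⟨hx, hy, _⟩ | ⟨hx, hy, hE⟩), ⟨hx', hy', hE'⟩⟩
    · exact hx' hx
    · exact hd01' _ _ ⟨hE, hE'⟩
  · rintro x y ⟨(⟨hx, hy, _⟩ | ⟨hx, hy, hE⟩), (⟨hx', hy'⟩ | ⟨hx', hy', hE'⟩)⟩
    · exact hy' hy
    · exact hx' hx
    · exact hx hx'
    · exact hd0r' _ _ ⟨hE, hE'⟩
  · rintro x y ⟨⟨hx, hy, hE⟩, (⟨hx', hy'⟩ | ⟨hx', hy', hE'⟩)⟩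
    · exact hx hx'
    · exact hd1r' _ _ ⟨hE, hE'⟩
  · intro x y hne
    by_cases hx : x ∈ C <;> by_cases hy : y ∈ C
    · exact Or.inl (Or.inl ⟨hx, hy, hne⟩)
    · exact Or.inr (Or.inr (Or.inl (Or.inl ⟨hx, hy⟩)))
    · exact Or.inr (Or.inr (Or.inr (Or.inl ⟨hy, hx⟩)))
    · rcases hfull' ⟨x, hx⟩ ⟨y, hy⟩ (fun h => hne (congrArg Subtype.val h)) with h | h | h | h
      · exact Or.inl (Or.inr ⟨hx, hy, h⟩)
      · exact Or.inr (Or.inl ⟨hx, hy, h⟩)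
      · exact Or.inr (Or.inr (Or.inl (Or.inr ⟨hx, hy, h⟩)))
      · exact Or.inr (Or.inr (Or.inr (Or.inr ⟨hy, hx, h⟩)))
  · intro x y hxy
    by_cases hx : x ∈ C <;> by_cases hy : y ∈ C
    · exact Or.inl ⟨hx, hy, fun h => hI0 x (h ▸ hxy)⟩
    · exact absurd (Or.inl (hS0 hxy)) (hout y hy x hx)
    · exact absurd (Or.inl hxy) (hout x hx y hy)
    · exact Or.inr ⟨hx, hy, ext0 ⟨x, hx⟩ ⟨y, hy⟩ hxy⟩
  · intro x y hxy
    by_cases hx : x ∈ C <;> by_cases hy : y ∈ C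
    · exact absurd (Or.inl hxy) (hin x hx y hy)
    · exact absurd (Or.inr (Or.inl (hS1 hxy))) (hout y hy x hx)
    · exact absurd (Or.inr (Or.inl hxy)) (hout x hx y hy)
    · exact ⟨hx, hy, ext1 ⟨x, hx⟩ ⟨y, hy⟩ hxy⟩
  · intro x y hxy
    by_cases hx : x ∈ C <;> by_cases hy : y ∈ C
    · exact absurd (Or.inr hxy) (hin x hx y hy)
    · exact Or.inl ⟨hx, hy⟩
    · exact absurd (Or.inr (Or.inr hxy)) (hout x hx y hy)
    · exact Or.inr ⟨hx, hy, extr ⟨x, hx⟩ ⟨y, hy⟩ hxy⟩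
  · -- the Fitch graph on univ
    have hB : IsFitchOn (fun x y =>
        liftRel Cᶜ F1' x y ∨ ((x ∈ C ∧ y ∈ Cᶜ) ∨ liftRel Cᶜ Fr' x y)) Cᶜ := by
      have h1 := fitch_lift (W := Cᶜ) (E := fun x y => F1' x y ∨ Fr' x y) hfitch'
      rw [Set.image_univ, Subtype.range_coe] at h1
      refine fitch_congr h1 ?_
      intro x hx y hy
      constructor
      · rintro ⟨hx', hy', (hE | hE)⟩
        · exact Or.inl ⟨hx', hy', hE⟩
        · exact Or.inr (Or.inr ⟨hx', hy', hE⟩)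
      · rintro (⟨hx', hy', hE⟩ | (⟨hxC, _⟩ | ⟨hx', hy', hE⟩))
        · exact ⟨hx', hy', Or.inl hE⟩
        · exact absurd hxC hx
        · exact ⟨hx', hy', Or.inr hE⟩
    have hfinal : IsFitchOn (fun x y =>
        liftRel Cᶜ F1' x y ∨ ((x ∈ C ∧ y ∈ Cᶜ) ∨ liftRel Cᶜ Fr' x y)) (C ∪ Cᶜ) := by
      refine .dirJoin C Cᶜ disjoint_compl_right hCne hCcne ?_ hB ?_
      · rintro x hx y hy (⟨hx', hy', _⟩ | (⟨_, hy'⟩ | ⟨hx', _, _⟩))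
        · exact hx' hx
        · exact hy' hy
        · exact hx' hx
      · intro a ha b hb
        refine ⟨Or.inr (Or.inl ⟨ha, hb⟩), ?_⟩
        rintro (⟨_, ha', _⟩ | (⟨hbC, _⟩ | ⟨_, ha', _⟩))
        · exact ha' ha
        · exact hb hbC
        · exact ha' ha
    rwa [Set.union_compl_self] at hfinal

/-- Sufficiency of rule (S3): if `G→ = (V, E0 ∪ E1 ∪ E→)` has more than one strongly
connected component and there is a strongly connected component `C` such that
(i) `E1 ∪ E→` has no edge inside `C`, (ii) no `G→`-edge enters `C` from outside, and
(iii) the restriction of the partial tuple to `V ∖ C` is Fitch-satisfiable, then the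
partial tuple is Fitch-satisfiable. -/
theorem fitchSat_of_S3 {V : Type*} [Fintype V] (E0 E1 Er : V → V → Prop)
    (h : IsPartialTuple E0 E1 Er)
    (hmulti : ∃ x y : V, ¬ (Relation.ReflTransGen (GFRel E0 E1 Er) x y ∧
      Relation.ReflTransGen (GFRel E0 E1 Er) y x))
    (hC : ∃ c : V,
      (∀ x ∈ scc (GFRel E0 E1 Er) c, ∀ y ∈ scc (GFRel E0 E1 Er) c, ¬ (E1 x y ∨ Er x y)) ∧
      (∀ x ∉ scc (GFRel E0 E1 Er) c, ∀ y ∈ scc (GFRel E0 E1 Er) c, ¬ GFRel E0 E1 Er x y) ∧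
      FitchSat (restrictRel E0 (scc (GFRel E0 E1 Er) c)ᶜ)
        (restrictRel E1 (scc (GFRel E0 E1 Er) c)ᶜ)
        (restrictRel Er (scc (GFRel E0 E1 Er) c)ᶜ)) :
    FitchSat E0 E1 Er := by
  obtain ⟨c, hin, hout, hsat⟩ := hC
  obtain ⟨hI0, hI1, hIr, hS0, hS1, hAr⟩ := h
  have hcC : c ∈ scc (GFRel E0 E1 Er) c := ⟨Relation.ReflTransGen.refl, Relation.ReflTransGen.refl⟩
  have hCcne : (scc (GFRel E0 E1 Er) c)ᶜ.Nonempty := by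
    by_contra hne
    rw [Set.not_nonempty_iff_eq_empty, Set.compl_empty_iff] at hne
    obtain ⟨x, y, hxy⟩ := hmulti
    have hx : x ∈ scc (GFRel E0 E1 Er) c := hne ▸ Set.mem_univ x
    have hy : y ∈ scc (GFRel E0 E1 Er) c := hne ▸ Set.mem_univ y
    exact hxy ⟨hx.2.trans hy.1, hy.2.trans hx.1⟩
  exact fitchSat_aux E0 E1 Er hI0 hI1 hIr hS0 hS1 _ ⟨c, hcC⟩ hCcne hin hout hsat
end

section
/- Characterization of Fitch-satisfiability: a partial tuple 𝓔 = (E0, E1, E→) on a finite nonempty vertex set V is Fitch-satisfiable if and only if at least one of the following statements holds. (S1) The relation E1 ∪ E→ has no edges. (S2) The graph G1 = (V, E0 ∪ E→) is disconnected, and 𝓔[C] is Fitch-satisfiable for every connected component C of G1. (S3) The digraph G→ = (V, E0 ∪ E1 ∪ E→) has more than one strongly connected component, and there exists a strongly connected component C of G→ such that the relation E1 ∪ E→ has no edge with both endpoints in C, no (E0 ∪ E1 ∪ E→)-edge goes from a vertex outside C to a vertex in C, and 𝓔[V∖C] is Fitch-satisfiable. -/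
/-- The edge relation of the graph `G1 = (V, E0 ∪ E→)`. -/
def G1Rel {V : Type*} (E0 Er : V → V → Prop) : V → V → Prop :=
  fun x y => E0 x y ∨ Er x y

/-- The connected component of `v` in `G1` (weak connectivity: the equivalence
relation generated by the edge relation). -/
def ccG1 {V : Type*} (E0 Er : V → V → Prop) (v : V) : Set V :=
  {y | Relation.EqvGen (G1Rel E0 Er) v y}

section Helpers
variable {V : Type*}

theorem isFitchOn_congr {E E' : V → V → Prop} {S : Set V}
    (h : IsFitchOn E S) (hEE : ∀ x ∈ S, ∀ y ∈ S, (E x y ↔ E' x y)) : IsFitchOn E' S := by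
  revert hEE
  induction h with
  | edgeless S h0 =>
      intro hEE
      exact .edgeless S (fun x hx y hy hxy => h0 x hx y hy ((hEE x hx y hy).2 hxy))
  | join A B hdisj hA hB fA fB hcr ihA ihB =>
      intro hEE
      exact .join A B hdisj hA hB (ihA fun x hx y hy => hEE x (.inl hx) y (.inl hy))
        (ihB fun x hx y hy => hEE x (.inr hx) y (.inr hy))
        (fun a ha b hb => ⟨(hEE a (.inl ha) b (.inr hb)).1 (hcr a ha b hb).1,
          (hEE b (.inr hb) a (.inl ha)).1 (hcr a ha b hb).2⟩)
  | dirJoin A B hdisj hA hB hAe fB hcr ihB =>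
      intro hEE
      exact .dirJoin A B hdisj hA hB
        (fun x hx y hy hxy => hAe x hx y hy ((hEE x (.inl hx) y (.inl hy)).2 hxy))
        (ihB fun x hx y hy => hEE x (.inr hx) y (.inr hy))
        (fun a ha b hb => ⟨(hEE a (.inl ha) b (.inr hb)).1 (hcr a ha b hb).1,
          fun hba => (hcr a ha b hb).2 ((hEE b (.inr hb) a (.inl ha)).2 hba)⟩)

theorem isFitchOn_inter {E : V → V → Prop} {S : Set V}
    (h : IsFitchOn E S) (W : Set V) : IsFitchOn E (S ∩ W) := by
  induction h with
  | edgeless S h0 => exact .edgeless _ (fun x hx y hy => h0 x hx.1 y hy.1)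
  | join A B hdisj hA hB fA fB hcr ihA ihB =>
      rw [Set.union_inter_distrib_right]
      rcases (A ∩ W).eq_empty_or_nonempty with hAW | hAW
      · rw [hAW, Set.empty_union]; exact ihB
      rcases (B ∩ W).eq_empty_or_nonempty with hBW | hBW
      · rw [hBW, Set.union_empty]; exact ihA
      exact .join _ _ (hdisj.mono Set.inter_subset_left Set.inter_subset_left) hAW hBW ihA ihB
        (fun a ha b hb => hcr a ha.1 b hb.1)
  | dirJoin A B hdisj hA hB hAe fB hcr ihB =>
      rw [Set.union_inter_distrib_right]
      rcases (A ∩ W).eq_empty_or_nonempty with hAW | hAW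
      · rw [hAW, Set.empty_union]; exact ihB
      rcases (B ∩ W).eq_empty_or_nonempty with hBW | hBW
      · rw [hBW, Set.union_empty]
        exact .edgeless _ (fun x hx y hy => hAe x hx.1 y hy.1)
      exact .dirJoin _ _ (hdisj.mono Set.inter_subset_left Set.inter_subset_left) hAW hBW
        (fun x hx y hy => hAe x hx.1 y hy.1) ihB
        (fun a ha b hb => hcr a ha.1 b hb.1)

theorem isFitchOn_toSubtype {E : V → V → Prop} {W : Set V} {S : Set V}
    (h : IsFitchOn E S) (hSW : S ⊆ W) :
    IsFitchOn (restrictRel E W) ((Subtype.val : W → V) ⁻¹' S) := by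
  revert hSW
  induction h with
  | edgeless S h0 =>
      intro hSW
      exact .edgeless _ (fun x hx y hy => h0 x.1 hx y.1 hy)
  | join A B hdisj hA hB fA fB hcr ihA ihB =>
      intro hSW
      rw [Set.preimage_union]
      have hAW : A ⊆ W := fun a ha => hSW (Or.inl ha)
      have hBW : B ⊆ W := fun b hb => hSW (Or.inr hb)
      refine .join _ _ (hdisj.preimage _) ?_ ?_ (ihA hAW) (ihB hBW)
        (fun a ha b hb => hcr a.1 ha b.1 hb)
      · obtain ⟨a, ha⟩ := hA; exact ⟨⟨a, hAW ha⟩, ha⟩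
      · obtain ⟨b, hb⟩ := hB; exact ⟨⟨b, hBW hb⟩, hb⟩
  | dirJoin A B hdisj hA hB hAe fB hcr ihB =>
      intro hSW
      rw [Set.preimage_union]
      have hAW : A ⊆ W := fun a ha => hSW (Or.inl ha)
      have hBW : B ⊆ W := fun b hb => hSW (Or.inr hb)
      refine .dirJoin _ _ (hdisj.preimage _) ?_ ?_
        (fun x hx y hy => hAe x.1 hx y.1 hy) (ihB hBW)
        (fun a ha b hb => hcr a.1 ha b.1 hb)
      · obtain ⟨a, ha⟩ := hA; exact ⟨⟨a, hAW ha⟩, ha⟩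
      · obtain ⟨b, hb⟩ := hB; exact ⟨⟨b, hBW hb⟩, hb⟩

theorem isFitchOn_univ_toSubtype {E : V → V → Prop} {W : Set V}
    (h : IsFitchOn E W) : IsFitchOn (restrictRel E W) (Set.univ : Set W) := by
  have := isFitchOn_toSubtype h (le_refl W)
  convert this using 1
  ext x
  simp [x.2]

theorem isFitchOn_ofSubtype {E : V → V → Prop} {W : Set V} {T : Set W}
    (h : IsFitchOn (restrictRel E W) T) : IsFitchOn E (Subtype.val '' T) := by
  induction h with
  | edgeless T h0 =>
      refine .edgeless _ ?_
      rintro x ⟨a, ha, rfl⟩ y ⟨b, hb, rfl⟩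
      exact h0 a ha b hb
  | join A B hdisj hA hB fA fB hcr ihA ihB =>
      rw [Set.image_union]
      refine .join _ _ ((Set.disjoint_image_iff Subtype.val_injective).2 hdisj)
        (hA.image _) (hB.image _) ihA ihB ?_
      rintro a ⟨a', ha', rfl⟩ b ⟨b', hb', rfl⟩
      exact hcr a' ha' b' hb'
  | dirJoin A B hdisj hA hB hAe fB hcr ihB =>
      rw [Set.image_union]
      refine .dirJoin _ _ ((Set.disjoint_image_iff Subtype.val_injective).2 hdisj)
        (hA.image _) (hB.image _) ?_ ihB ?_
      · rintro x ⟨a, ha, rfl⟩ y ⟨b, hb, rfl⟩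
        exact hAe a ha b hb
      rintro a ⟨a', ha', rfl⟩ b ⟨b', hb', rfl⟩
      exact hcr a' ha' b' hb'

theorem isFitchOn_univ_ofSubtype {E : V → V → Prop} {W : Set V}
    (h : IsFitchOn (restrictRel E W) (Set.univ : Set W)) : IsFitchOn E W := by
  have := isFitchOn_ofSubtype h
  rwa [Subtype.coe_image_univ] at this

theorem FitchSat.restrict {E0 E1 Er : V → V → Prop} (h : FitchSat E0 E1 Er) (W : Set V) :
    FitchSat (restrictRel E0 W) (restrictRel E1 W) (restrictRel Er W) := by
  obtain ⟨F0, F1, Fr, ⟨h00, h11, hrr, hs0, hs1, har⟩, ⟨d01, d0r, d1r, cov⟩,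
    e0, e1, er, hfit⟩ := h
  refine ⟨restrictRel F0 W, restrictRel F1 W, restrictRel Fr W,
    ⟨fun x => h00 x.1, fun x => h11 x.1, fun x => hrr x.1,
      fun x y hxy => hs0 hxy, fun x y hxy => hs1 hxy, fun x y => har x.1 y.1⟩,
    ⟨fun x y => d01 x.1 y.1, fun x y => d0r x.1 y.1, fun x y => d1r x.1 y.1,
      fun x y hxy => cov x.1 y.1 (fun hv => hxy (Subtype.ext hv))⟩,
    fun x y => e0 x.1 y.1, fun x y => e1 x.1 y.1, fun x y => er x.1 y.1, ?_⟩
  have h2 : IsFitchOn (fun x y => F1 x y ∨ Fr x y) W := by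
    have := isFitchOn_inter hfit W
    rwa [Set.univ_inter] at this
  exact isFitchOn_univ_toSubtype h2

end Helpers

section Backward
variable {V : Type*}

theorem back_S1 (E0 E1 Er : V → V → Prop) (h : IsPartialTuple E0 E1 Er)
    (h1 : ∀ x y : V, ¬ (E1 x y ∨ Er x y)) : FitchSat E0 E1 Er := by
  refine ⟨fun x y => x ≠ y, fun _ _ => False, fun _ _ => False,
    ⟨fun x hx => hx rfl, fun _ hx => hx, fun _ hx => hx,
      fun _ _ hxy => hxy.symm, fun _ _ hxy => hxy, fun _ _ hxy => hxy.elim⟩,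
    ⟨fun _ _ hc => hc.2, fun _ _ hc => hc.2, fun _ _ hc => hc.2,
      fun _ _ hne => Or.inl hne⟩,
    fun x y he heq => h.1 x (heq ▸ he),
    fun x y he => absurd (Or.inl he) (h1 x y),
    fun x y he => absurd (Or.inr he) (h1 x y), ?_⟩
  exact .edgeless _ (fun x _ y _ hxy => hxy.elim id id)

theorem back_S3 (E0 E1 Er : V → V → Prop) (h : IsPartialTuple E0 E1 Er)
    (hne : ∃ x y : V, ¬ (Relation.ReflTransGen (GFRel E0 E1 Er) x y ∧
          Relation.ReflTransGen (GFRel E0 E1 Er) y x))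
    (c : V)
    (hC1 : ∀ x ∈ scc (GFRel E0 E1 Er) c, ∀ y ∈ scc (GFRel E0 E1 Er) c, ¬ (E1 x y ∨ Er x y))
    (hC2 : ∀ x ∉ scc (GFRel E0 E1 Er) c, ∀ y ∈ scc (GFRel E0 E1 Er) c, ¬ GFRel E0 E1 Er x y)
    (hCs : FitchSat (restrictRel E0 (scc (GFRel E0 E1 Er) c)ᶜ)
            (restrictRel E1 (scc (GFRel E0 E1 Er) c)ᶜ)
            (restrictRel Er (scc (GFRel E0 E1 Er) c)ᶜ)) :
    FitchSat E0 E1 Er := by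
  classical
  set C := scc (GFRel E0 E1 Er) c with hCdef
  obtain ⟨B0, B1, Br, ⟨b00, b11, brr, bs0, bs1, bar⟩, ⟨bd01, bd0r, bd1r, bcov⟩,
    be0, be1, ber, bfit⟩ := hCs
  set F0 : V → V → Prop :=
    fun x y => (x ∈ C ∧ y ∈ C ∧ x ≠ y) ∨ ∃ hx : x ∈ Cᶜ, ∃ hy : y ∈ Cᶜ, B0 ⟨x, hx⟩ ⟨y, hy⟩
    with hF0
  set F1 : V → V → Prop :=
    fun x y => ∃ hx : x ∈ Cᶜ, ∃ hy : y ∈ Cᶜ, B1 ⟨x, hx⟩ ⟨y, hy⟩ with hF1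
  set Fr : V → V → Prop :=
    fun x y => (x ∈ C ∧ y ∉ C) ∨ ∃ hx : x ∈ Cᶜ, ∃ hy : y ∈ Cᶜ, Br ⟨x, hx⟩ ⟨y, hy⟩ with hFr
  have hcC : c ∈ C := ⟨Relation.ReflTransGen.refl, Relation.ReflTransGen.refl⟩
  have hCcne : (Cᶜ : Set V).Nonempty := by
    rcases Set.eq_empty_or_nonempty (Cᶜ : Set V) with hemp | hne'
    · exfalso
      have hall : ∀ z : V, z ∈ C := by
        intro z
        by_contra hz
        exact (Set.eq_empty_iff_forall_notMem.1 hemp) z hz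
      obtain ⟨x, y, hxy⟩ := hne
      exact hxy ⟨(hall x).2.trans (hall y).1, (hall y).2.trans (hall x).1⟩
    · exact hne'
  refine ⟨F0, F1, Fr, ⟨?_, ?_, ?_, ?_, ?_, ?_⟩, ⟨?_, ?_, ?_, ?_⟩, ?_, ?_, ?_, ?_⟩
  · -- Irreflexive F0
    rintro x (⟨_, _, hxx⟩ | ⟨hx, hy, hb⟩)
    · exact hxx rfl
    · exact b00 _ hb
  · -- Irreflexive F1
    rintro x ⟨hx, hy, hb⟩
    exact b11 _ hb
  · -- Irreflexive Fr
    rintro x (⟨h1, h2⟩ | ⟨hx, hy, hb⟩)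
    · exact h2 h1
    · exact brr _ hb
  · -- Symmetric F0
    rintro x y (⟨h1, h2, h3⟩ | ⟨hx, hy, hb⟩)
    · exact Or.inl ⟨h2, h1, h3.symm⟩
    · exact Or.inr ⟨hy, hx, bs0 hb⟩
  · -- Symmetric F1
    rintro x y ⟨hx, hy, hb⟩
    exact ⟨hy, hx, bs1 hb⟩
  · -- antisymmetric Fr
    rintro x y (⟨h1, h2⟩ | ⟨hx, hy, hb⟩) (⟨h1', h2'⟩ | ⟨hx', hy', hb'⟩)
    · exact h2 h1'
    · exact hy' h1
    · exact hy h1'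
    · exact bar _ _ hb hb'
  · -- F0 F1 disjoint
    rintro x y ⟨(⟨h1, h2, h3⟩ | ⟨hx, hy, hb⟩), ⟨hx', hy', hb'⟩⟩
    · exact hx' h1
    · exact bd01 _ _ ⟨hb, hb'⟩
  · -- F0 Fr disjoint
    rintro x y ⟨(⟨h1, h2, h3⟩ | ⟨hx, hy, hb⟩), (⟨h1', h2'⟩ | ⟨hx', hy', hb'⟩)⟩
    · exact h2' h2
    · exact hx' h1
    · exact hx h1'
    · exact bd0r _ _ ⟨hb, hb'⟩
  · -- F1 Fr disjoint
    rintro x y ⟨⟨hx, hy, hb⟩, (⟨h1', h2'⟩ | ⟨hx', hy', hb'⟩)⟩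
    · exact hx h1'
    · exact bd1r _ _ ⟨hb, hb'⟩
  · -- coverage
    intro x y hxy
    by_cases hx : x ∈ C <;> by_cases hy : y ∈ C
    · exact Or.inl (Or.inl ⟨hx, hy, hxy⟩)
    · exact Or.inr (Or.inr (Or.inl (Or.inl ⟨hx, hy⟩)))
    · exact Or.inr (Or.inr (Or.inr (Or.inl ⟨hy, hx⟩)))
    · rcases bcov ⟨x, hx⟩ ⟨y, hy⟩ (fun he => hxy (congrArg Subtype.val he)) with
        hc | hc | hc | hc
      · exact Or.inl (Or.inr ⟨hx, hy, hc⟩)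
      · exact Or.inr (Or.inl ⟨hx, hy, hc⟩)
      · exact Or.inr (Or.inr (Or.inl (Or.inr ⟨hx, hy, hc⟩)))
      · exact Or.inr (Or.inr (Or.inr (Or.inr ⟨hy, hx, hc⟩)))
  · -- extends E0
    intro x y he
    by_cases hx : x ∈ C <;> by_cases hy : y ∈ C
    · exact Or.inl ⟨hx, hy, fun heq => h.1 x (heq ▸ he)⟩
    · exact absurd (Or.inl (h.2.2.2.1 he)) (hC2 y hy x hx)
    · exact absurd (Or.inl he) (hC2 x hx y hy)
    · exact Or.inr ⟨hx, hy, be0 ⟨x, hx⟩ ⟨y, hy⟩ he⟩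
  · -- extends E1
    intro x y he
    by_cases hx : x ∈ C <;> by_cases hy : y ∈ C
    · exact absurd (Or.inl he) (hC1 x hx y hy)
    · exact absurd (Or.inr (Or.inl (h.2.2.2.2.1 he))) (hC2 y hy x hx)
    · exact absurd (Or.inr (Or.inl he)) (hC2 x hx y hy)
    · exact ⟨hx, hy, be1 ⟨x, hx⟩ ⟨y, hy⟩ he⟩
  · -- extends Er
    intro x y he
    by_cases hx : x ∈ C <;> by_cases hy : y ∈ C
    · exact absurd (Or.inr he) (hC1 x hx y hy)
    · exact Or.inl ⟨hx, hy⟩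
    · exact absurd (Or.inr (Or.inr he)) (hC2 x hx y hy)
    · exact Or.inr ⟨hx, hy, ber ⟨x, hx⟩ ⟨y, hy⟩ he⟩
  · -- Fitch graph
    have hB : IsFitchOn (fun x y => F1 x y ∨ Fr x y) (Cᶜ : Set V) := by
      refine isFitchOn_univ_ofSubtype (W := (Cᶜ : Set V)) ?_
      refine isFitchOn_congr bfit ?_
      intro a _ b _
      constructor
      · rintro (hb | hb)
        · exact Or.inl ⟨a.2, b.2, hb⟩
        · exact Or.inr (Or.inr ⟨a.2, b.2, hb⟩)
      · rintro (⟨ha', hb', hb⟩ | (⟨h1, _⟩ | ⟨ha', hb', hb⟩))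
        · exact Or.inl hb
        · exact absurd h1 a.2
        · exact Or.inr hb
    have hmain : IsFitchOn (fun x y => F1 x y ∨ Fr x y) (C ∪ Cᶜ) := by
      refine .dirJoin C Cᶜ disjoint_compl_right ⟨c, hcC⟩ hCcne ?_ hB ?_
      · rintro x hx y hy (⟨hx', _, _⟩ | (⟨_, hy''⟩ | ⟨hx', _, _⟩))
        · exact hx' hx
        · exact hy'' hy
        · exact hx' hx
      · intro a ha b hb
        refine ⟨Or.inr (Or.inl ⟨ha, hb⟩), ?_⟩
        rintro (⟨_, ha', _⟩ | (⟨hbC, _⟩ | ⟨_, ha', _⟩))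
        · exact ha' ha
        · exact hb hbC
        · exact ha' ha
    rwa [Set.union_compl_self] at hmain

end Backward

theorem isFitchOn_biUnion {V ι : Type*} [DecidableEq ι] (E : V → V → Prop) (f : ι → Set V)
    (hne : ∀ q, (f q).Nonempty) (hdisj : ∀ q q', q ≠ q' → Disjoint (f q) (f q'))
    (hf : ∀ q, IsFitchOn E (f q))
    (hcross : ∀ q q', q ≠ q' → ∀ a ∈ f q, ∀ b ∈ f q', E a b) :
    ∀ T : Finset ι, T.Nonempty → IsFitchOn E (⋃ q ∈ T, f q) := by
  intro T
  induction T using Finset.induction_on with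
  | empty => intro hT; exact absurd hT Finset.not_nonempty_empty
  | @insert a T ha ih =>
      intro _
      rw [Finset.set_biUnion_insert]
      rcases T.eq_empty_or_nonempty with rfl | hT
      · simpa using hf a
      · refine .join _ _ ?_ (hne a) ?_ (hf a) (ih hT) ?_
        · rw [Set.disjoint_iUnion_right]
          intro q
          rw [Set.disjoint_iUnion_right]
          intro hq
          exact hdisj a q (by rintro rfl; exact ha hq)
        · obtain ⟨q, hq⟩ := hT
          obtain ⟨x, hx⟩ := hne q
          exact ⟨x, Set.mem_biUnion hq hx⟩
        · intro u hu w hw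
          obtain ⟨q, hq, hwq⟩ := Set.mem_iUnion₂.1 hw
          have hqa : a ≠ q := by rintro rfl; exact ha hq
          exact ⟨hcross a q hqa u hu w hwq, hcross q a hqa.symm w hwq u hu⟩

theorem back_S2 {V : Type*} [Fintype V] [Nonempty V] (E0 E1 Er : V → V → Prop)
    (h : IsPartialTuple E0 E1 Er)
    (hcomp : ∀ v : V, FitchSat (restrictRel E0 (ccG1 E0 Er v)) (restrictRel E1 (ccG1 E0 Er v))
      (restrictRel Er (ccG1 E0 Er v))) : FitchSat E0 E1 Er := by
  classical
  choose A0 A1 Ar spec using hcomp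
  set R := G1Rel E0 Er with hR
  let s : Setoid V := Relation.EqvGen.setoid R
  let q : V → Quotient s := fun x => Quotient.mk s x
  have mem_self : ∀ x : V, x ∈ ccG1 E0 Er (q x).out :=
    fun x => (Quotient.mk_out (s := s) x : Relation.EqvGen R (q x).out x)
  have mem_of : ∀ x y : V, Relation.EqvGen R x y → y ∈ ccG1 E0 Er (q x).out :=
    fun x y hxy => Relation.EqvGen.trans _ _ _ (mem_self x) hxy
  have same_out : ∀ x y : V, Relation.EqvGen R x y → (q x).out = (q y).out :=
    fun x y hxy => congrArg Quotient.out (Quotient.sound hxy)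
  have cast_lem : ∀ (T : (v : V) → ↥(ccG1 E0 Er v) → ↥(ccG1 E0 Er v) → Prop)
      (w w' x y : V) (hww : w = w') (hx : x ∈ ccG1 E0 Er w) (hy : y ∈ ccG1 E0 Er w)
      (hx' : x ∈ ccG1 E0 Er w') (hy' : y ∈ ccG1 E0 Er w'),
      T w ⟨x, hx⟩ ⟨y, hy⟩ → T w' ⟨x, hx'⟩ ⟨y, hy'⟩ := by
    rintro T w w' x y rfl hx hy hx' hy' ht
    exact ht
  set F0 : V → V → Prop := fun x y =>
    ∃ hq : Relation.EqvGen R x y, A0 (q x).out ⟨x, mem_self x⟩ ⟨y, mem_of x y hq⟩ with hF0d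
  set F1 : V → V → Prop := fun x y =>
    (∃ hq : Relation.EqvGen R x y, A1 (q x).out ⟨x, mem_self x⟩ ⟨y, mem_of x y hq⟩) ∨
      (x ≠ y ∧ ¬ Relation.EqvGen R x y) with hF1d
  set Fr : V → V → Prop := fun x y =>
    ∃ hq : Relation.EqvGen R x y, Ar (q x).out ⟨x, mem_self x⟩ ⟨y, mem_of x y hq⟩ with hFrd
  refine ⟨F0, F1, Fr, ⟨?_, ?_, ?_, ?_, ?_, ?_⟩, ⟨?_, ?_, ?_, ?_⟩, ?_, ?_, ?_, ?_⟩
  · -- Irreflexive F0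
    rintro x ⟨hq, ha⟩
    exact (spec (q x).out).1.1 _ ha
  · -- Irreflexive F1
    rintro x (⟨hq, ha⟩ | ⟨hne, _⟩)
    · exact (spec (q x).out).1.2.1 _ ha
    · exact hne rfl
  · -- Irreflexive Fr
    rintro x ⟨hq, ha⟩
    exact (spec (q x).out).1.2.2.1 _ ha
  · -- Symmetric F0
    rintro x y ⟨hq, ha⟩
    refine ⟨hq.symm, ?_⟩
    exact cast_lem A0 (q x).out (q y).out y x (same_out x y hq) (mem_of x y hq)
      (mem_self x) (mem_self y) (mem_of y x hq.symm)
      ((spec (q x).out).1.2.2.2.1 ha)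
  · -- Symmetric F1
    rintro x y (⟨hq, ha⟩ | ⟨hne, hnq⟩)
    · exact Or.inl ⟨hq.symm, cast_lem A1 (q x).out (q y).out y x (same_out x y hq)
        (mem_of x y hq) (mem_self x) (mem_self y) (mem_of y x hq.symm)
        ((spec (q x).out).1.2.2.2.2.1 ha)⟩
    · exact Or.inr ⟨hne.symm, fun h' => hnq h'.symm⟩
  · -- antisymmetric Fr
    rintro x y ⟨hq, ha⟩ ⟨hq', hb⟩
    have hb' := cast_lem Ar (q y).out (q x).out y x (same_out y x hq') (mem_self y)
      (mem_of y x hq') (mem_of x y hq) (mem_self x) hb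
    exact (spec (q x).out).1.2.2.2.2.2 _ _ ha hb'
  · -- F0 F1 disjoint
    rintro x y ⟨⟨hq, ha⟩, (⟨hq2, hb⟩ | ⟨_, hnq⟩)⟩
    · exact (spec (q x).out).2.1.1 _ _ ⟨ha, hb⟩
    · exact hnq hq
  · -- F0 Fr disjoint
    rintro x y ⟨⟨hq, ha⟩, ⟨hq2, hb⟩⟩
    exact (spec (q x).out).2.1.2.1 _ _ ⟨ha, hb⟩
  · -- F1 Fr disjoint
    rintro x y ⟨(⟨hq, ha⟩ | ⟨_, hnq⟩), ⟨hq2, hb⟩⟩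
    · exact (spec (q x).out).2.1.2.2.1 _ _ ⟨ha, hb⟩
    · exact hnq hq2
  · -- coverage
    intro x y hxy
    by_cases hq : Relation.EqvGen R x y
    · rcases (spec (q x).out).2.1.2.2.2 ⟨x, mem_self x⟩ ⟨y, mem_of x y hq⟩
        (fun he => hxy (congrArg Subtype.val he)) with hc | hc | hc | hc
      · exact Or.inl ⟨hq, hc⟩
      · exact Or.inr (Or.inl (Or.inl ⟨hq, hc⟩))
      · exact Or.inr (Or.inr (Or.inl ⟨hq, hc⟩))
      · refine Or.inr (Or.inr (Or.inr ⟨hq.symm, ?_⟩))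
        exact cast_lem Ar (q x).out (q y).out y x (same_out x y hq) (mem_of x y hq)
          (mem_self x) (mem_self y) (mem_of y x hq.symm) hc
    · exact Or.inr (Or.inl (Or.inr ⟨hxy, hq⟩))
  · -- extends E0
    intro x y he
    have hq : Relation.EqvGen R x y := Relation.EqvGen.rel _ _ (Or.inl he)
    exact ⟨hq, (spec (q x).out).2.2.1 ⟨x, mem_self x⟩ ⟨y, mem_of x y hq⟩ he⟩
  · -- extends E1
    intro x y he
    by_cases hq : Relation.EqvGen R x y
    · exact Or.inl ⟨hq, (spec (q x).out).2.2.2.1 ⟨x, mem_self x⟩ ⟨y, mem_of x y hq⟩ he⟩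
    · exact Or.inr ⟨fun heq => h.2.1 x (heq ▸ he), hq⟩
  · -- extends Er
    intro x y he
    have hq : Relation.EqvGen R x y := Relation.EqvGen.rel _ _ (Or.inr he)
    exact ⟨hq, (spec (q x).out).2.2.2.2.1 ⟨x, mem_self x⟩ ⟨y, mem_of x y hq⟩ he⟩
  · -- Fitch graph
    haveI : Fintype (Quotient s) := Fintype.ofFinite _
    set f : Quotient s → Set V := fun t => {v | q v = t} with hfd
    have hfeq : ∀ t : Quotient s, f t = ccG1 E0 Er t.out := by
      intro t
      ext v
      constructor
      · intro hv
        have hmo : Relation.EqvGen R (q v).out v := Quotient.mk_out (s := s) v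
        rw [show q v = t from hv] at hmo
        exact hmo
      · intro hv
        have h1 : Quotient.mk s t.out = Quotient.mk s v := Quotient.sound hv
        exact h1.symm.trans t.out_eq
    have hnef : ∀ t : Quotient s, (f t).Nonempty := fun t => ⟨t.out, t.out_eq⟩
    have hdisjf : ∀ t t', t ≠ t' → Disjoint (f t) (f t') := by
      intro t t' htt
      rw [Set.disjoint_left]
      intro v hv hv'
      exact htt ((show q v = t from hv).symm.trans hv')
    have hEq_on : ∀ t : Quotient s, IsFitchOn (fun x y => F1 x y ∨ Fr x y) (f t) := by
      intro t
      rw [hfeq t]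
      refine isFitchOn_univ_ofSubtype (W := ccG1 E0 Er t.out) ?_
      refine isFitchOn_congr ((spec t.out).2.2.2.2.2) ?_
      intro a _ b _
      have hqa : Relation.EqvGen R a.1 b.1 := (Relation.EqvGen.symm _ _ a.2).trans _ _ _ b.2
      have hout : (q a.1).out = t.out := by
        have hqt : q a.1 = t := (Quotient.sound a.2).symm.trans t.out_eq
        rw [hqt]
      constructor
      · rintro (ha | ha)
        · exact Or.inl (Or.inl ⟨hqa, cast_lem A1 t.out (q a.1).out a.1 b.1 hout.symm a.2 b.2
            (mem_self a.1) (mem_of a.1 b.1 hqa) ha⟩)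
        · exact Or.inr ⟨hqa, cast_lem Ar t.out (q a.1).out a.1 b.1 hout.symm a.2 b.2
            (mem_self a.1) (mem_of a.1 b.1 hqa) ha⟩
      · rintro ((⟨hq', ha⟩ | ⟨_, hnq⟩) | ⟨hq', ha⟩)
        · exact Or.inl (cast_lem A1 (q a.1).out t.out a.1 b.1 hout (mem_self a.1)
            (mem_of a.1 b.1 hq') a.2 b.2 ha)
        · exact absurd hqa hnq
        · exact Or.inr (cast_lem Ar (q a.1).out t.out a.1 b.1 hout (mem_self a.1)
            (mem_of a.1 b.1 hq') a.2 b.2 ha)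
    have hcrossf : ∀ t t', t ≠ t' → ∀ a ∈ f t, ∀ b ∈ f t',
        (fun x y => F1 x y ∨ Fr x y) a b := by
      intro t t' htt a ha b hb
      have hnq : ¬ Relation.EqvGen R a b := fun hq' => by
        refine htt ?_
        rw [← (show q a = t from ha), ← (show q b = t' from hb)]
        exact Quotient.sound hq'
      have hab : a ≠ b := by
        rintro rfl
        exact htt ((show q a = t from ha).symm.trans hb)
      exact Or.inl (Or.inr ⟨hab, hnq⟩)
    have hU := isFitchOn_biUnion (fun x y => F1 x y ∨ Fr x y) f hnef hdisjf hEq_on hcrossf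
      Finset.univ ⟨q (Classical.arbitrary V), Finset.mem_univ _⟩
    have huniv : (⋃ t ∈ (Finset.univ : Finset (Quotient s)), f t) = Set.univ := by
      ext v
      simp only [Set.mem_iUnion, Set.mem_univ, iff_true]
      exact ⟨q v, Finset.mem_univ _, rfl⟩
    rwa [huniv] at hU


section Forward
variable {V : Type*} [Fintype V] [Nonempty V]

theorem fitch_forward (E0 E1 Er : V → V → Prop) (h : IsPartialTuple E0 E1 Er)
    (hsat : FitchSat E0 E1 Er) :
    ((∀ x y : V, ¬ (E1 x y ∨ Er x y)) ∨
      ((∃ x y : V, ¬ Relation.EqvGen (G1Rel E0 Er) x y) ∧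
        ∀ v : V,
          FitchSat (restrictRel E0 (ccG1 E0 Er v)) (restrictRel E1 (ccG1 E0 Er v))
            (restrictRel Er (ccG1 E0 Er v))) ∨
      ((∃ x y : V, ¬ (Relation.ReflTransGen (GFRel E0 E1 Er) x y ∧
          Relation.ReflTransGen (GFRel E0 E1 Er) y x)) ∧
        ∃ c : V,
          (∀ x ∈ scc (GFRel E0 E1 Er) c, ∀ y ∈ scc (GFRel E0 E1 Er) c, ¬ (E1 x y ∨ Er x y)) ∧
          (∀ x ∉ scc (GFRel E0 E1 Er) c, ∀ y ∈ scc (GFRel E0 E1 Er) c, ¬ GFRel E0 E1 Er x y) ∧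
          FitchSat (restrictRel E0 (scc (GFRel E0 E1 Er) c)ᶜ)
            (restrictRel E1 (scc (GFRel E0 E1 Er) c)ᶜ)
            (restrictRel Er (scc (GFRel E0 E1 Er) c)ᶜ))) := by
  obtain ⟨F0, F1, Fr, ⟨h00, h11, hrr, hs0, hs1, har⟩, ⟨d01, d0r, d1r, cov⟩,
    e0, e1, er, hfit⟩ := hsat
  have hsat' : FitchSat E0 E1 Er :=
    ⟨F0, F1, Fr, ⟨h00, h11, hrr, hs0, hs1, har⟩, ⟨d01, d0r, d1r, cov⟩, e0, e1, er, hfit⟩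
  generalize hS : (Set.univ : Set V) = S at hfit
  cases hfit with
  | edgeless S h0 =>
      left
      intro x y hxy
      rcases hxy with h' | h'
      · exact h0 x (hS ▸ Set.mem_univ x) y (hS ▸ Set.mem_univ y) (Or.inl (e1 x y h'))
      · exact h0 x (hS ▸ Set.mem_univ x) y (hS ▸ Set.mem_univ y) (Or.inr (er x y h'))
  | join A B hdisj hA hB fA fB hcr =>
      have memAB : ∀ x : V, x ∈ A ∨ x ∈ B := fun x => by
        have hx : x ∈ A ∪ B := hS ▸ Set.mem_univ x
        exact hx
      have crossF1 : ∀ a ∈ A, ∀ b ∈ B, F1 a b := by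
        intro a ha b hb
        rcases (hcr a ha b hb).1 with h1 | hr
        · exact h1
        exfalso
        rcases (hcr a ha b hb).2 with h1' | hr'
        · exact d1r a b ⟨hs1 h1', hr⟩
        · exact har a b hr hr'
      have noCross : ∀ x y, G1Rel E0 Er x y → ((x ∈ A ∧ y ∈ A) ∨ (x ∈ B ∧ y ∈ B)) := by
        intro x y hg
        have hF1 : ∀ u ∈ A, ∀ w ∈ B, ¬ G1Rel E0 Er u w := by
          intro u hu w hw hg'
          rcases hg' with h' | h'
          · exact d01 u w ⟨e0 u w h', crossF1 u hu w hw⟩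
          · exact d1r u w ⟨crossF1 u hu w hw, er u w h'⟩
        rcases memAB x with hx | hx <;> rcases memAB y with hy | hy
        · exact Or.inl ⟨hx, hy⟩
        · exact absurd hg (hF1 x hx y hy)
        · exfalso
          rcases hg with h' | h'
          · exact hF1 y hy x hx (Or.inl (h.2.2.2.1 h'))
          · exact d1r x y ⟨hs1 (crossF1 y hy x hx), er x y h'⟩
        · exact Or.inr ⟨hx, hy⟩
      have classInv : ∀ x y, Relation.EqvGen (G1Rel E0 Er) x y → (x ∈ A ↔ y ∈ A) := by
        intro x y hxy
        induction hxy with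
        | rel u w h' =>
            rcases noCross u w h' with ⟨h1, h2⟩ | ⟨h1, h2⟩
            · exact ⟨fun _ => h2, fun _ => h1⟩
            · exact ⟨fun hu => absurd h1 (Set.disjoint_right.1 hdisj.symm hu),
                fun hw => absurd h2 (Set.disjoint_right.1 hdisj.symm hw)⟩
        | refl u => exact Iff.rfl
        | symm u w _ ih => exact ih.symm
        | trans u w z _ _ ih1 ih2 => exact ih1.trans ih2
      right; left
      obtain ⟨a, ha⟩ := hA
      obtain ⟨b, hb⟩ := hB
      refine ⟨⟨a, b, fun hE => ?_⟩, fun v => hsat'.restrict _⟩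
      exact Set.disjoint_left.1 hdisj ((classInv a b hE).1 ha) hb
  | dirJoin A B hdisj hA hB hAe fB hcr =>
      have memAB : ∀ x : V, x ∈ A ∨ x ∈ B := fun x => by
        have hx : x ∈ A ∪ B := hS ▸ Set.mem_univ x
        exact hx
      have crossFr : ∀ a ∈ A, ∀ b ∈ B, Fr a b := by
        intro a ha b hb
        rcases (hcr a ha b hb).1 with h1 | hr
        · exact absurd (Or.inl (hs1 h1)) (hcr a ha b hb).2
        · exact hr
      have noBA : ∀ b ∈ B, ∀ a ∈ A, ¬ GFRel E0 E1 Er b a := by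
        intro b hb a ha hg
        have hra := crossFr a ha b hb
        rcases hg with h' | h' | h'
        · exact d0r a b ⟨hs0 (e0 b a h'), hra⟩
        · exact (hcr a ha b hb).2 (Or.inl (e1 b a h'))
        · exact (hcr a ha b hb).2 (Or.inr (er b a h'))
      have Bcl : ∀ x y, x ∈ B → GFRel E0 E1 Er x y → y ∈ B := by
        intro x y hx hg
        rcases memAB y with hy | hy
        · exact absurd hg (noBA x hx y hy)
        · exact hy
      have BclR : ∀ x y, x ∈ B → Relation.ReflTransGen (GFRel E0 E1 Er) x y → y ∈ B := by
        intro x y hx hrtg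
        induction hrtg with
        | refl => exact hx
        | tail _ h2 ih => exact Bcl _ _ ih h2
      obtain ⟨a, ha⟩ := hA
      obtain ⟨b, hb⟩ := hB
      have CsubA : scc (GFRel E0 E1 Er) a ⊆ A := by
        intro y hy
        rcases memAB y with hy' | hy'
        · exact hy'
        · exact absurd ha (Set.disjoint_right.1 hdisj (BclR y a hy' hy.2))
      right; right
      refine ⟨⟨a, b, fun hE => ?_⟩, a, ?_, ?_, hsat'.restrict _⟩
      · exact Set.disjoint_left.1 hdisj ha (BclR b a hb hE.2)
      · intro x hx y hy hxy
        rcases hxy with h' | h'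
        · exact hAe x (CsubA hx) y (CsubA hy) (Or.inl (e1 x y h'))
        · exact hAe x (CsubA hx) y (CsubA hy) (Or.inr (er x y h'))
      · intro x hx y hy hg
        rcases memAB x with hxA | hxB
        · rcases hg with h' | h' | h'
          · refine hx ⟨hy.1.tail (show GFRel E0 E1 Er y x from Or.inl (h.2.2.2.1 h')), ?_⟩
            exact (Relation.ReflTransGen.single (show GFRel E0 E1 Er x y from Or.inl h')).trans hy.2
          · exact hAe x hxA y (CsubA hy) (Or.inl (e1 x y h'))
          · exact hAe x hxA y (CsubA hy) (Or.inr (er x y h'))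
        · exact noBA x hxB y (CsubA hy) hg

end Forward


/-- Characterization of Fitch-satisfiability: a partial tuple on a nonempty finite
vertex set is Fitch-satisfiable iff at least one of the rules (S1), (S2), (S3) applies. -/
theorem fitchSat_characterization {V : Type*} [Fintype V] [Nonempty V]
    (E0 E1 Er : V → V → Prop) (h : IsPartialTuple E0 E1 Er) :
    FitchSat E0 E1 Er ↔
      -- (S1): G0 = (V, E1 ∪ E→) is edge-less
      ((∀ x y : V, ¬ (E1 x y ∨ Er x y)) ∨
      -- (S2): G1 = (V, E0 ∪ E→) is disconnected and each connected component
      -- induces a Fitch-satisfiable partial tuple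
      ((∃ x y : V, ¬ Relation.EqvGen (G1Rel E0 Er) x y) ∧
        ∀ v : V,
          FitchSat (restrictRel E0 (ccG1 E0 Er v)) (restrictRel E1 (ccG1 E0 Er v))
            (restrictRel Er (ccG1 E0 Er v))) ∨
      -- (S3): G→ = (V, E0 ∪ E1 ∪ E→) has more than one strongly connected component and
      -- some strongly connected component C is G0-edge-less, has no G→-edge entering it,
      -- and V ∖ C induces a Fitch-satisfiable partial tuple
      ((∃ x y : V, ¬ (Relation.ReflTransGen (GFRel E0 E1 Er) x y ∧
          Relation.ReflTransGen (GFRel E0 E1 Er) y x)) ∧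
        ∃ c : V,
          (∀ x ∈ scc (GFRel E0 E1 Er) c, ∀ y ∈ scc (GFRel E0 E1 Er) c, ¬ (E1 x y ∨ Er x y)) ∧
          (∀ x ∉ scc (GFRel E0 E1 Er) c, ∀ y ∈ scc (GFRel E0 E1 Er) c, ¬ GFRel E0 E1 Er x y) ∧
          FitchSat (restrictRel E0 (scc (GFRel E0 E1 Er) c)ᶜ)
            (restrictRel E1 (scc (GFRel E0 E1 Er) c)ᶜ)
            (restrictRel Er (scc (GFRel E0 E1 Er) c)ᶜ))) := by
  constructor
  · exact fitch_forward E0 E1 Er h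
  · rintro (h1 | ⟨hd, hc⟩ | ⟨hne, c, hC1, hC2, hCs⟩)
    · exact back_S1 E0 E1 Er h h1
    · exact back_S2 E0 E1 Er h hc
    · exact back_S3 E0 E1 Er h hne c hC1 hC2 hCs
end

section
/- Consistency of the satisfiability rules: let 𝓔 = (E0, E1, E→) be a partial tuple on a finite vertex set V; write (S1) for 'E1 ∪ E→ has no edges', (S2a) for 'G1 = (V, E0 ∪ E→) is disconnected', (S2b) for '𝓔[C] is Fitch-satisfiable for every connected component C of G1', and say that a strongly connected component C of G→ = (V, E0 ∪ E1 ∪ E→) witnesses (S3a) if G→ has more than one strongly connected component, E1 ∪ E→ has no edge with both endpoints in C, and no (E0 ∪ E1 ∪ E→)-edge goes from a vertex outside C into C. Then: (1) if (S1) and (S2a) hold, then (S2b) holds; (2) if (S1) holds and some strongly connected component C witnesses (S3a), then 𝓔[V∖C] is Fitch-satisfiable; (3) if (S2a) holds and some strongly connected component C witnesses (S3a), then (S2b) holds if and only if 𝓔[V∖C] is Fitch-satisfiable. -/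
/-- Rule (S1): `E1 ∪ E→` has no edges. -/
def RuleS1 {V : Type*} (E1 Er : V → V → Prop) : Prop :=
  ∀ x y : V, ¬ (E1 x y ∨ Er x y)

/-- Rule (S2a): `G1 = (V, E0 ∪ E→)` is disconnected. -/
def RuleS2a {V : Type*} (E0 Er : V → V → Prop) : Prop :=
  ∃ x y : V, ¬ Relation.EqvGen (G1Rel E0 Er) x y

/-- Rule (S2b): the restriction of the partial tuple to every connected component
of `G1` is Fitch-satisfiable. -/
def RuleS2b {V : Type*} (E0 E1 Er : V → V → Prop) : Prop :=
  ∀ v : V,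
    FitchSat (restrictRel E0 (ccG1 E0 Er v)) (restrictRel E1 (ccG1 E0 Er v))
      (restrictRel Er (ccG1 E0 Er v))

/-- The strongly connected component of `c` in `G→` witnesses rule (S3a): `G→` has
more than one strongly connected component, `E1 ∪ E→` has no edge inside the
component of `c`, and no `G→`-edge enters it from outside. -/
def WitnessS3a {V : Type*} (E0 E1 Er : V → V → Prop) (c : V) : Prop :=
  (∃ x y : V, ¬ (Relation.ReflTransGen (GFRel E0 E1 Er) x y ∧
    Relation.ReflTransGen (GFRel E0 E1 Er) y x)) ∧
  (∀ x ∈ scc (GFRel E0 E1 Er) c, ∀ y ∈ scc (GFRel E0 E1 Er) c, ¬ (E1 x y ∨ Er x y)) ∧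
  (∀ x ∉ scc (GFRel E0 E1 Er) c, ∀ y ∈ scc (GFRel E0 E1 Er) c, ¬ GFRel E0 E1 Er x y)

/-- Fitch-satisfiability of the restriction of the partial tuple to the complement of
the strongly connected component of `c` in `G→`. -/
def SatComplS3 {V : Type*} (E0 E1 Er : V → V → Prop) (c : V) : Prop :=
  FitchSat (restrictRel E0 (scc (GFRel E0 E1 Er) c)ᶜ)
    (restrictRel E1 (scc (GFRel E0 E1 Er) c)ᶜ)
    (restrictRel Er (scc (GFRel E0 E1 Er) c)ᶜ)

section FitchHelpers

variable {V W : Type*}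

theorem IsFitchOn.hered {E : V → V → Prop} {S : Set V} (h : IsFitchOn E S) :
    ∀ T ⊆ S, IsFitchOn E T := by
  induction h with
  | edgeless S h =>
    intro T hT
    exact .edgeless T fun x hx y hy => h x (hT hx) y (hT hy)
  | join A B hdisj hA hB fA fB h ihA ihB =>
    intro T hT
    rcases (T ∩ A).eq_empty_or_nonempty with hTA | hTA
    · refine ihB T fun x hx => ?_
      rcases hT hx with h' | h'
      · exact (Set.eq_empty_iff_forall_notMem.1 hTA x ⟨hx, h'⟩).elim
      · exact h'
    rcases (T ∩ B).eq_empty_or_nonempty with hTB | hTB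
    · refine ihA T fun x hx => ?_
      rcases hT hx with h' | h'
      · exact h'
      · exact (Set.eq_empty_iff_forall_notMem.1 hTB x ⟨hx, h'⟩).elim
    · have hTeq : T = (T ∩ A) ∪ (T ∩ B) := by
        apply Set.Subset.antisymm
        · intro x hx
          rcases hT hx with h' | h'
          · exact Or.inl ⟨hx, h'⟩
          · exact Or.inr ⟨hx, h'⟩
        · rintro x (⟨hx, -⟩ | ⟨hx, -⟩) <;> exact hx
      rw [hTeq]
      exact .join _ _ (hdisj.mono Set.inter_subset_right Set.inter_subset_right)
        hTA hTB (ihA _ Set.inter_subset_right) (ihB _ Set.inter_subset_right)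
        (fun a ha b hb => h a ha.2 b hb.2)
  | dirJoin A B hdisj hA hB hAe fB h ihB =>
    intro T hT
    rcases (T ∩ A).eq_empty_or_nonempty with hTA | hTA
    · refine ihB T fun x hx => ?_
      rcases hT hx with h' | h'
      · exact (Set.eq_empty_iff_forall_notMem.1 hTA x ⟨hx, h'⟩).elim
      · exact h'
    rcases (T ∩ B).eq_empty_or_nonempty with hTB | hTB
    · refine .edgeless T fun x hx y hy => ?_
      have hsub : ∀ z ∈ T, z ∈ A := by
        intro z hz
        rcases hT hz with h' | h'
        · exact h'
        · exact (Set.eq_empty_iff_forall_notMem.1 hTB z ⟨hz, h'⟩).elim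
      exact hAe x (hsub x hx) y (hsub y hy)
    · have hTeq : T = (T ∩ A) ∪ (T ∩ B) := by
        apply Set.Subset.antisymm
        · intro x hx
          rcases hT hx with h' | h'
          · exact Or.inl ⟨hx, h'⟩
          · exact Or.inr ⟨hx, h'⟩
        · rintro x (⟨hx, -⟩ | ⟨hx, -⟩) <;> exact hx
      rw [hTeq]
      exact .dirJoin _ _ (hdisj.mono Set.inter_subset_right Set.inter_subset_right)
        hTA hTB (fun x hx y hy => hAe x hx.2 y hy.2) (ihB _ Set.inter_subset_right)
        (fun a ha b hb => h a ha.2 b hb.2)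

theorem IsFitchOn.comap {E : W → W → Prop} {S : Set W} (h : IsFitchOn E S) (f : V → W) :
    IsFitchOn (fun x y => E (f x) (f y)) (f ⁻¹' S) := by
  induction h with
  | edgeless S h =>
    exact .edgeless _ fun x hx y hy => h _ hx _ hy
  | join A B hdisj hA hB fA fB h ihA ihB =>
    rw [Set.preimage_union]
    rcases (f ⁻¹' A).eq_empty_or_nonempty with hA' | hA'
    · rw [hA', Set.empty_union]; exact ihB
    rcases (f ⁻¹' B).eq_empty_or_nonempty with hB' | hB'
    · rw [hB', Set.union_empty]; exact ihA
    exact .join _ _ (hdisj.preimage f) hA' hB' ihA ihB (fun a ha b hb => h _ ha _ hb)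
  | dirJoin A B hdisj hA hB hAe fB h ihB =>
    rw [Set.preimage_union]
    rcases (f ⁻¹' A).eq_empty_or_nonempty with hA' | hA'
    · rw [hA', Set.empty_union]; exact ihB
    rcases (f ⁻¹' B).eq_empty_or_nonempty with hB' | hB'
    · rw [hB', Set.union_empty]
      exact .edgeless _ fun x hx y hy => hAe _ hx _ hy
    exact .dirJoin _ _ (hdisj.preimage f) hA' hB'
      (fun x hx y hy => hAe _ hx _ hy) ihB (fun a ha b hb => h _ ha _ hb)

theorem IsFitchOn.map (f : V → W) (E : W → W → Prop) {E' : V → V → Prop} {T : Set V}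
    (h : IsFitchOn E' T) :
    Set.InjOn f T → (∀ x ∈ T, ∀ y ∈ T, (E' x y ↔ E (f x) (f y))) → IsFitchOn E (f '' T) := by
  induction h with
  | edgeless S h =>
    intro hinj hE
    refine .edgeless _ ?_
    rintro x ⟨a, ha, rfl⟩ y ⟨b, hb, rfl⟩
    exact fun hab => h a ha b hb ((hE a ha b hb).2 hab)
  | join A B hdisj hA hB fA fB h ihA ihB =>
    intro hinj hE
    rw [Set.image_union]
    have hdisj' : Disjoint (f '' A) (f '' B) := by
      rw [Set.disjoint_left]
      rintro x ⟨a, ha, rfl⟩ ⟨b, hb, hba⟩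
      have hba' : b = a := hinj (Or.inr hb) (Or.inl ha) hba
      exact Set.disjoint_left.1 hdisj ha (hba' ▸ hb)
    refine .join _ _ hdisj' (hA.image f) (hB.image f)
      (ihA (hinj.mono Set.subset_union_left)
        (fun x hx y hy => hE x (Or.inl hx) y (Or.inl hy)))
      (ihB (hinj.mono Set.subset_union_right)
        (fun x hx y hy => hE x (Or.inr hx) y (Or.inr hy))) ?_
    rintro x ⟨a, ha, rfl⟩ y ⟨b, hb, rfl⟩
    exact ⟨(hE a (Or.inl ha) b (Or.inr hb)).1 (h a ha b hb).1,
      (hE b (Or.inr hb) a (Or.inl ha)).1 (h a ha b hb).2⟩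
  | dirJoin A B hdisj hA hB hAe fB h ihB =>
    intro hinj hE
    rw [Set.image_union]
    have hdisj' : Disjoint (f '' A) (f '' B) := by
      rw [Set.disjoint_left]
      rintro x ⟨a, ha, rfl⟩ ⟨b, hb, hba⟩
      have hba' : b = a := hinj (Or.inr hb) (Or.inl ha) hba
      exact Set.disjoint_left.1 hdisj ha (hba' ▸ hb)
    refine .dirJoin _ _ hdisj' (hA.image f) (hB.image f) ?_
      (ihB (hinj.mono Set.subset_union_right)
        (fun x hx y hy => hE x (Or.inr hx) y (Or.inr hy))) ?_
    · rintro x ⟨a, ha, rfl⟩ y ⟨b, hb, rfl⟩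
      exact fun hab => hAe a ha b hb ((hE a (Or.inl ha) b (Or.inl hb)).2 hab)
    · rintro x ⟨a, ha, rfl⟩ y ⟨b, hb, rfl⟩
      refine ⟨(hE a (Or.inl ha) b (Or.inr hb)).1 (h a ha b hb).1, fun hba => ?_⟩
      exact (h a ha b hb).2 ((hE b (Or.inr hb) a (Or.inl ha)).2 hba)

theorem FitchSat.pullback {A B : Type*} (f : A → B) (hf : Function.Injective f)
    {E0 E1 Er : B → B → Prop} {D0 D1 Dr : A → A → Prop}
    (h0 : ∀ x y, D0 x y → E0 (f x) (f y)) (h1 : ∀ x y, D1 x y → E1 (f x) (f y))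
    (hr : ∀ x y, Dr x y → Er (f x) (f y))
    (hs : FitchSat E0 E1 Er) : FitchSat D0 D1 Dr := by
  obtain ⟨F0, F1, Fr, ⟨i0, i1, ir, s0, s1, ar⟩, ⟨d01, d0r, d1r, tot⟩, e0, e1, er, hfit⟩ := hs
  refine ⟨fun x y => F0 (f x) (f y), fun x y => F1 (f x) (f y), fun x y => Fr (f x) (f y),
    ⟨fun x => i0 (f x), fun x => i1 (f x), fun x => ir (f x),
     fun x y h => s0 h, fun x y h => s1 h, fun x y h h' => ar _ _ h h'⟩,
    ⟨fun x y => d01 _ _, fun x y => d0r _ _, fun x y => d1r _ _,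
     fun x y hxy => tot _ _ (fun he => hxy (hf he))⟩,
    fun x y h => e0 _ _ (h0 _ _ h), fun x y h => e1 _ _ (h1 _ _ h),
    fun x y h => er _ _ (hr _ _ h), ?_⟩
  have hc := hfit.comap f
  rwa [Set.preimage_univ] at hc

theorem trivialSat {A : Type*} {D0 D1 Dr : A → A → Prop}
    (h0 : ∀ x y, D0 x y → x ≠ y) (h1 : ∀ x y, ¬ D1 x y) (hr : ∀ x y, ¬ Dr x y) :
    FitchSat D0 D1 Dr := by
  refine ⟨fun x y => x ≠ y, fun _ _ => False, fun _ _ => False,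
    ⟨fun x hx => hx rfl, fun _ hx => hx, fun _ hx => hx,
     fun _ _ h => h.symm, fun _ _ h => h.elim, fun _ _ h => h.elim⟩,
    ⟨fun x y h => h.2, fun x y h => h.2, fun x y h => h.1, fun x y h => Or.inl h⟩,
    fun x y h => h0 x y h, fun x y h => (h1 x y h).elim, fun x y h => (hr x y h).elim, ?_⟩
  exact .edgeless _ fun x _ y _ h => h.elim id id

end FitchHelpers
theorem glueSat {V : Type*} [Fintype V] (E0 E1 Er : V → V → Prop)
    (h2b : RuleS2b E0 E1 Er) : FitchSat E0 E1 Er := by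
  classical
  letI s : Setoid V := Relation.EqvGen.setoid (G1Rel E0 Er)
  set rep : V → V := fun x => (Quotient.mk s x).out with hrepdef
  have hrep_mem : ∀ x : V, Relation.EqvGen (G1Rel E0 Er) (rep x) x := fun x =>
    Quotient.mk_out x
  have hrep_eq : ∀ {x y : V}, Relation.EqvGen (G1Rel E0 Er) x y → rep x = rep y :=
    fun {x y} h => congrArg Quotient.out (Quotient.sound h)
  have hmem : ∀ x : V, x ∈ ccG1 E0 Er (rep x) := fun x => hrep_mem x
  choose T0 T1 Tr hPT hFT hx0 hx1 hxr hfit using h2b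
  have transport : ∀ (T : ∀ v : V, ↥(ccG1 E0 Er v) → ↥(ccG1 E0 Er v) → Prop)
      {v v' : V}, v = v' → ∀ {x y : V},
      (∃ hx : x ∈ ccG1 E0 Er v, ∃ hy : y ∈ ccG1 E0 Er v, T v ⟨x, hx⟩ ⟨y, hy⟩) →
      (∃ hx : x ∈ ccG1 E0 Er v', ∃ hy : y ∈ ccG1 E0 Er v', T v' ⟨x, hx⟩ ⟨y, hy⟩) := by
    rintro T v v' rfl x y h; exact h
  have key : ∀ (T : ∀ v : V, ↥(ccG1 E0 Er v) → ↥(ccG1 E0 Er v) → Prop) (v x y : V),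
      (∃ hx : x ∈ ccG1 E0 Er v, ∃ hy : y ∈ ccG1 E0 Er v, T v ⟨x, hx⟩ ⟨y, hy⟩) →
      Relation.EqvGen (G1Rel E0 Er) x y := by
    rintro T v x y ⟨hx, hy, -⟩
    exact .trans _ _ _ (.symm _ _ hx) hy
  refine ⟨fun x y => ∃ hx : x ∈ ccG1 E0 Er (rep x), ∃ hy : y ∈ ccG1 E0 Er (rep x),
      T0 (rep x) ⟨x, hx⟩ ⟨y, hy⟩,
    fun x y => (¬ Relation.EqvGen (G1Rel E0 Er) x y) ∨
      (∃ hx : x ∈ ccG1 E0 Er (rep x), ∃ hy : y ∈ ccG1 E0 Er (rep x),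
        T1 (rep x) ⟨x, hx⟩ ⟨y, hy⟩),
    fun x y => ∃ hx : x ∈ ccG1 E0 Er (rep x), ∃ hy : y ∈ ccG1 E0 Er (rep x),
      Tr (rep x) ⟨x, hx⟩ ⟨y, hy⟩, ⟨?_, ?_, ?_, ?_, ?_, ?_⟩, ⟨?_, ?_, ?_, ?_⟩, ?_, ?_, ?_, ?_⟩
  -- irreflexive F0
  · rintro x ⟨hx, hy, h⟩
    exact (hPT (rep x)).1 _ h
  -- irreflexive F1
  · rintro x (h | ⟨hx, hy, h⟩)
    · exact h (.refl x)
    · exact (hPT (rep x)).2.1 _ h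
  -- irreflexive Fr
  · rintro x ⟨hx, hy, h⟩
    exact (hPT (rep x)).2.2.1 _ h
  -- symmetric F0
  · rintro x y h
    have e : rep x = rep y := hrep_eq (key T0 _ _ _ h)
    obtain ⟨hx, hy, h'⟩ := h
    exact transport T0 e ⟨hy, hx, (hPT (rep x)).2.2.2.1 h'⟩
  -- symmetric F1
  · rintro x y (h | h)
    · exact Or.inl fun h' => h (.symm _ _ h')
    · have e : rep x = rep y := hrep_eq (key T1 _ _ _ h)
      obtain ⟨hx, hy, h'⟩ := h
      exact Or.inr (transport T1 e ⟨hy, hx, (hPT (rep x)).2.2.2.2.1 h'⟩)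
  -- antisymmetric Fr
  · rintro x y h h'
    have e : rep x = rep y := hrep_eq (key Tr _ _ _ h)
    have h'' := transport Tr e.symm h'
    obtain ⟨hx, hy, h1⟩ := h
    obtain ⟨hy', hx', h2⟩ := h''
    exact (hPT (rep x)).2.2.2.2.2 _ _ h1 h2
  -- disjoint F0 F1
  · rintro x y ⟨h0, h1 | h1⟩
    · exact h1 (key T0 _ _ _ h0)
    · obtain ⟨hx, hy, h0⟩ := h0
      obtain ⟨hx', hy', h1⟩ := h1
      exact (hFT (rep x)).1 _ _ ⟨h0, h1⟩
  -- disjoint F0 Fr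
  · rintro x y ⟨h0, h1⟩
    obtain ⟨hx, hy, h0⟩ := h0
    obtain ⟨hx', hy', h1⟩ := h1
    exact (hFT (rep x)).2.1 _ _ ⟨h0, h1⟩
  -- disjoint F1 Fr
  · rintro x y ⟨h0 | h0, h1⟩
    · exact h0 (key Tr _ _ _ h1)
    · obtain ⟨hx, hy, h0⟩ := h0
      obtain ⟨hx', hy', h1⟩ := h1
      exact (hFT (rep x)).2.2.1 _ _ ⟨h0, h1⟩
  -- totality
  · intro x y hxy
    by_cases hsame : Relation.EqvGen (G1Rel E0 Er) x y
    · have hx : x ∈ ccG1 E0 Er (rep x) := hmem x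
      have hy : y ∈ ccG1 E0 Er (rep x) := .trans _ _ _ (hrep_mem x) hsame
      have hne : (⟨x, hx⟩ : ↥(ccG1 E0 Er (rep x))) ≠ ⟨y, hy⟩ :=
        fun h => hxy (congrArg Subtype.val h)
      rcases (hFT (rep x)).2.2.2 _ _ hne with h | h | h | h
      · exact Or.inl ⟨hx, hy, h⟩
      · exact Or.inr (Or.inl (Or.inr ⟨hx, hy, h⟩))
      · exact Or.inr (Or.inr (Or.inl ⟨hx, hy, h⟩))
      · exact Or.inr (Or.inr (Or.inr
          (transport Tr (hrep_eq hsame) ⟨hy, hx, h⟩)))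
    · exact Or.inr (Or.inl (Or.inl hsame))
  -- extends E0
  · intro x y h
    have hsame : Relation.EqvGen (G1Rel E0 Er) x y := .rel _ _ (Or.inl h)
    have hx : x ∈ ccG1 E0 Er (rep x) := hmem x
    have hy : y ∈ ccG1 E0 Er (rep x) := .trans _ _ _ (hrep_mem x) hsame
    exact ⟨hx, hy, hx0 (rep x) ⟨x, hx⟩ ⟨y, hy⟩ h⟩
  -- extends E1
  · intro x y h
    by_cases hsame : Relation.EqvGen (G1Rel E0 Er) x y
    · have hx : x ∈ ccG1 E0 Er (rep x) := hmem x
      have hy : y ∈ ccG1 E0 Er (rep x) := .trans _ _ _ (hrep_mem x) hsame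
      exact Or.inr ⟨hx, hy, hx1 (rep x) ⟨x, hx⟩ ⟨y, hy⟩ h⟩
    · exact Or.inl hsame
  -- extends Er
  · intro x y h
    have hsame : Relation.EqvGen (G1Rel E0 Er) x y := .rel _ _ (Or.inr h)
    have hx : x ∈ ccG1 E0 Er (rep x) := hmem x
    have hy : y ∈ ccG1 E0 Er (rep x) := .trans _ _ _ (hrep_mem x) hsame
    exact ⟨hx, hy, hxr (rep x) ⟨x, hx⟩ ⟨y, hy⟩ h⟩
  -- the Fitch graph
  · let Efull : V → V → Prop := fun x y =>
      ((¬ Relation.EqvGen (G1Rel E0 Er) x y) ∨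
        (∃ hx : x ∈ ccG1 E0 Er (rep x), ∃ hy : y ∈ ccG1 E0 Er (rep x),
          T1 (rep x) ⟨x, hx⟩ ⟨y, hy⟩)) ∨
      (∃ hx : x ∈ ccG1 E0 Er (rep x), ∃ hy : y ∈ ccG1 E0 Er (rep x),
        Tr (rep x) ⟨x, hx⟩ ⟨y, hy⟩)
    show IsFitchOn Efull Set.univ
    have hccmem : ∀ (x r : V), rep r = r → x ∈ ccG1 E0 Er r → rep x = r := by
      intro x r hr hx
      exact (hrep_eq hx).symm.trans hr
    have piece : ∀ r : V, rep r = r → IsFitchOn Efull (ccG1 E0 Er r) := by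
      intro r hr
      have hmap := (hfit r).map (Subtype.val) Efull (Set.injOn_of_injective Subtype.val_injective)
        (fun a _ b _ => ?_)
      · rwa [Set.image_univ, Subtype.range_coe] at hmap
      constructor
      · rintro (h | h)
        · exact Or.inl (Or.inr (transport T1 (hccmem a.1 r hr a.2).symm ⟨a.2, b.2, h⟩))
        · exact Or.inr (transport Tr (hccmem a.1 r hr a.2).symm ⟨a.2, b.2, h⟩)
      · rintro ((h | h) | h)
        · exact absurd (Relation.EqvGen.trans _ _ _ (.symm _ _ a.2) b.2) h
        · obtain ⟨hx, hy, h'⟩ := transport T1 (hccmem a.1 r hr a.2) h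
          exact Or.inl h'
        · obtain ⟨hx, hy, h'⟩ := transport Tr (hccmem a.1 r hr a.2) h
          exact Or.inr h'
    have union_fitch : ∀ (t : Finset V), (∀ r ∈ t, rep r = r) →
        IsFitchOn Efull (⋃ r ∈ t, ccG1 E0 Er r) := by
      intro t
      induction t using Finset.induction_on with
      | empty =>
        intro _
        have he : (⋃ r ∈ (∅ : Finset V), ccG1 E0 Er r) = (∅ : Set V) := by simp
        rw [he]
        exact .edgeless ∅ (by simp)
      | @insert a t ha ih =>
        intro hreps
        have hra : rep a = a := hreps a (Finset.mem_insert_self a t)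
        have hs : ∀ r ∈ t, rep r = r := fun r hrt => hreps r (Finset.mem_insert_of_mem hrt)
        rw [Finset.set_biUnion_insert]
        rcases t.eq_empty_or_nonempty with rfl | hne
        · simpa using piece a hra
        · have hBne : (⋃ r ∈ t, ccG1 E0 Er r).Nonempty := by
            obtain ⟨r, hrt⟩ := hne
            exact ⟨r, Set.mem_biUnion hrt (Relation.EqvGen.refl r)⟩
          have hdisj : Disjoint (ccG1 E0 Er a) (⋃ r ∈ t, ccG1 E0 Er r) := by
            rw [Set.disjoint_left]
            intro x hxa hxu
            obtain ⟨r, hrt, hxr⟩ := Set.mem_iUnion₂.1 hxu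
            have : a = r := (hccmem x a hra hxa).symm.trans (hccmem x r (hs r hrt) hxr)
            exact ha (this ▸ hrt)
          refine .join _ _ hdisj ⟨a, Relation.EqvGen.refl a⟩ hBne (piece a hra)
            (ih hs) ?_
          intro a' ha' b' hb'
          obtain ⟨r, hrt, hbr⟩ := Set.mem_iUnion₂.1 hb'
          have hnotsame : ¬ Relation.EqvGen (G1Rel E0 Er) a' b' := by
            intro hsame
            have : a = r := ((hccmem a' a hra ha').symm.trans (hrep_eq hsame)).trans
              (hccmem b' r (hs r hrt) hbr)
            exact ha (this ▸ hrt)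
          exact ⟨Or.inl (Or.inl hnotsame),
            Or.inl (Or.inl fun h' => hnotsame (.symm _ _ h'))⟩
    have huniv : (Set.univ : Set V) = ⋃ r ∈ Finset.univ.image rep, ccG1 E0 Er r := by
      apply Set.Subset.antisymm
      · intro x _
        exact Set.mem_biUnion (Finset.mem_image_of_mem rep (Finset.mem_univ x)) (hmem x)
      · intro x _; trivial
    have hrr : ∀ r ∈ Finset.univ.image rep, rep r = r := by
      intro r hrim
      obtain ⟨z, -, rfl⟩ := Finset.mem_image.1 hrim
      exact hrep_eq (hrep_mem z)
    rw [huniv]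
    exact union_fitch _ hrr
theorem s3_components {V : Type*} (E0 E1 Er : V → V → Prop) (h : IsPartialTuple E0 E1 Er)
    (c : V) (hw : WitnessS3a E0 E1 Er c) (hsat : SatComplS3 E0 E1 Er c) :
    RuleS2b E0 E1 Er := by
  classical
  obtain ⟨i0V, i1V, irV, s0V, s1V, arV⟩ := h
  obtain ⟨-, hin, hext⟩ := hw
  set C : Set V := scc (GFRel E0 E1 Er) c with hCdef
  have hcC : c ∈ C := ⟨Relation.ReflTransGen.refl, Relation.ReflTransGen.refl⟩
  -- within C, any two vertices are connected in G1
  have hpath : ∀ x ∈ C, ∀ z ∈ C, Relation.EqvGen (G1Rel E0 Er) x z := by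
    have key : ∀ x z : V, Relation.ReflTransGen (GFRel E0 E1 Er) x z → x ∈ C → z ∈ C →
        Relation.EqvGen (G1Rel E0 Er) x z := by
      intro x z hxz
      induction hxz using Relation.ReflTransGen.head_induction_on with
      | refl => intro _ _; exact .refl _
      | @head a b hab hbz ih =>
        intro haC hzC
        have hbC : b ∈ C := ⟨haC.1.tail hab, hbz.trans hzC.2⟩
        have hE0 : E0 a b := by
          rcases hab with h' | h'
          · exact h'
          · exact absurd h' (hin a haC b hbC)
        exact .trans _ _ _ (.rel _ _ (Or.inl hE0)) (ih hbC hzC)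
    intro x hx z hz
    exact key x z (hx.2.trans hz.1) hx hz
  intro v
  by_cases hmeet : (ccG1 E0 Er v ∩ C).Nonempty
  · -- the component of v contains C
    obtain ⟨x0, hx0cc, hx0C⟩ := hmeet
    have hCsub : C ⊆ ccG1 E0 Er v := fun z hz =>
      Relation.EqvGen.trans _ _ _ hx0cc (hpath x0 hx0C z hz)
    obtain ⟨F0c, F1c, Frc, ⟨i0c, i1c, irc, s0c, s1c, arc⟩, ⟨d01, d0r, d1r, totc⟩,
      e0c, e1c, erc, hfitc⟩ := hsat
    refine ⟨fun x y => (x.1 ∈ C ∧ y.1 ∈ C ∧ x ≠ y) ∨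
        (∃ hx : x.1 ∈ Cᶜ, ∃ hy : y.1 ∈ Cᶜ, F0c ⟨x.1, hx⟩ ⟨y.1, hy⟩),
      fun x y => ∃ hx : x.1 ∈ Cᶜ, ∃ hy : y.1 ∈ Cᶜ, F1c ⟨x.1, hx⟩ ⟨y.1, hy⟩,
      fun x y => (x.1 ∈ C ∧ y.1 ∉ C) ∨
        (∃ hx : x.1 ∈ Cᶜ, ∃ hy : y.1 ∈ Cᶜ, Frc ⟨x.1, hx⟩ ⟨y.1, hy⟩),
      ⟨?_, ?_, ?_, ?_, ?_, ?_⟩, ⟨?_, ?_, ?_, ?_⟩, ?_, ?_, ?_, ?_⟩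
    -- irrefl F0
    · rintro x (⟨-, -, hne⟩ | ⟨hx, hy, h'⟩)
      · exact hne rfl
      · exact i0c _ h'
    -- irrefl F1
    · rintro x ⟨hx, hy, h'⟩
      exact i1c _ h'
    -- irrefl Fr
    · rintro x (⟨hxC, hxC'⟩ | ⟨hx, hy, h'⟩)
      · exact hxC' hxC
      · exact irc _ h'
    -- symm F0
    · rintro x y (⟨hxC, hyC, hne⟩ | ⟨hx, hy, h'⟩)
      · exact Or.inl ⟨hyC, hxC, hne.symm⟩
      · exact Or.inr ⟨hy, hx, s0c h'⟩
    -- symm F1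
    · rintro x y ⟨hx, hy, h'⟩
      exact ⟨hy, hx, s1c h'⟩
    -- antisym Fr
    · rintro x y (⟨hxC, hyC⟩ | ⟨hx, hy, h1⟩) (⟨hyC', hxC'⟩ | ⟨hy', hx', h2⟩)
      · exact hyC hyC'
      · exact hx' hxC
      · exact hy hyC'
      · exact arc _ _ h1 h2
    -- disjoint F0 F1
    · rintro x y ⟨⟨hxC, -, -⟩ | ⟨hx, hy, h1⟩, ⟨hx', hy', h2⟩⟩
      · exact hx' hxC
      · exact d01 _ _ ⟨h1, h2⟩
    -- disjoint F0 Fr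
    · rintro x y ⟨⟨hxC, hyC, -⟩ | ⟨hx, hy, h1⟩, ⟨hxC', hyC'⟩ | ⟨hx', hy', h2⟩⟩
      · exact hyC' hyC
      · exact hx' hxC
      · exact hx hxC'
      · exact d0r _ _ ⟨h1, h2⟩
    -- disjoint F1 Fr
    · rintro x y ⟨⟨hx, hy, h1⟩, ⟨hxC, -⟩ | ⟨hx', hy', h2⟩⟩
      · exact hx hxC
      · exact d1r _ _ ⟨h1, h2⟩
    -- totality
    · intro x y hxy
      by_cases hxC : x.1 ∈ C <;> by_cases hyC : y.1 ∈ C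
      · exact Or.inl (Or.inl ⟨hxC, hyC, hxy⟩)
      · exact Or.inr (Or.inr (Or.inl (Or.inl ⟨hxC, hyC⟩)))
      · exact Or.inr (Or.inr (Or.inr (Or.inl ⟨hyC, hxC⟩)))
      · have hne : (⟨x.1, hxC⟩ : ↥(Cᶜ)) ≠ ⟨y.1, hyC⟩ := by
          intro h'
          exact hxy (Subtype.ext (congrArg (fun z : ↥(Cᶜ) => z.1) h'))
        rcases totc _ _ hne with h' | h' | h' | h'
        · exact Or.inl (Or.inr ⟨hxC, hyC, h'⟩)
        · exact Or.inr (Or.inl ⟨hxC, hyC, h'⟩)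
        · exact Or.inr (Or.inr (Or.inl (Or.inr ⟨hxC, hyC, h'⟩)))
        · exact Or.inr (Or.inr (Or.inr (Or.inr ⟨hyC, hxC, h'⟩)))
    -- extends E0
    · intro x y hE
      by_cases hxC : x.1 ∈ C <;> by_cases hyC : y.1 ∈ C
      · refine Or.inl ⟨hxC, hyC, fun h' => ?_⟩
        exact i0V x.1 (by cases h'; exact hE)
      · exact (hext y.1 hyC x.1 hxC (Or.inl (s0V hE))).elim
      · exact (hext x.1 hxC y.1 hyC (Or.inl hE)).elim
      · exact Or.inr ⟨hxC, hyC, e0c _ _ hE⟩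
    -- extends E1
    · intro x y hE
      by_cases hxC : x.1 ∈ C <;> by_cases hyC : y.1 ∈ C
      · exact (hin x.1 hxC y.1 hyC (Or.inl hE)).elim
      · exact (hext y.1 hyC x.1 hxC (Or.inr (Or.inl (s1V hE)))).elim
      · exact (hext x.1 hxC y.1 hyC (Or.inr (Or.inl hE))).elim
      · exact ⟨hxC, hyC, e1c _ _ hE⟩
    -- extends Er
    · intro x y hE
      by_cases hxC : x.1 ∈ C <;> by_cases hyC : y.1 ∈ C
      · exact (hin x.1 hxC y.1 hyC (Or.inr hE)).elim
      · exact Or.inl ⟨hxC, hyC⟩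
      · exact (hext x.1 hxC y.1 hyC (Or.inr (Or.inr hE))).elim
      · exact Or.inr ⟨hxC, hyC, erc _ _ hE⟩
    -- the Fitch graph
    · set D : Set V := ccG1 E0 Er v with hDdef
      let Efull : ↥D → ↥D → Prop := fun x y =>
        (∃ hx : x.1 ∈ Cᶜ, ∃ hy : y.1 ∈ Cᶜ, F1c ⟨x.1, hx⟩ ⟨y.1, hy⟩) ∨
        ((x.1 ∈ C ∧ y.1 ∉ C) ∨
          (∃ hx : x.1 ∈ Cᶜ, ∃ hy : y.1 ∈ Cᶜ, Frc ⟨x.1, hx⟩ ⟨y.1, hy⟩))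
      show IsFitchOn Efull Set.univ
      have hA'edge : ∀ x : ↥D, x.1 ∈ C → ∀ y : ↥D, y.1 ∈ C → ¬ Efull x y := by
        rintro x hxC y hyC (⟨hx, -, -⟩ | (⟨-, hyC'⟩ | ⟨hx, -, -⟩))
        · exact hx hxC
        · exact hyC' hyC
        · exact hx hxC
      have huniv : (Set.univ : Set ↥D) =
          {x : ↥D | x.1 ∈ C} ∪ {x : ↥D | x.1 ∉ C} := by
        apply Set.Subset.antisymm
        · intro x _
          by_cases hx : x.1 ∈ C
          · exact Or.inl hx
          · exact Or.inr hx
        · intro x _; trivial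
      rcases ({x : ↥D | x.1 ∉ C}).eq_empty_or_nonempty with hBe | hBne
      · rw [huniv, hBe, Set.union_empty]
        exact .edgeless _ fun x hx y hy => hA'edge x hx y hy
      · -- the part of the component outside C is Fitch
        have fB : IsFitchOn Efull {x : ↥D | x.1 ∉ C} := by
          let f : ↥(Cᶜ) → ↥D := fun z =>
            if hz : z.1 ∈ D then ⟨z.1, hz⟩ else ⟨v, Relation.EqvGen.refl v⟩
          have h1 := hfitc.hered {z : ↥(Cᶜ) | z.1 ∈ D} (Set.subset_univ _)
          have hmap := h1.map f Efull ?_ ?_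
          · have himg : f '' {z : ↥(Cᶜ) | z.1 ∈ D} = {x : ↥D | x.1 ∉ C} := by
              apply Set.Subset.antisymm
              · rintro x ⟨z, hz, rfl⟩
                show (f z).1 ∉ C
                rw [show f z = ⟨z.1, hz⟩ from dif_pos hz]
                exact z.2
              · intro x hx
                refine ⟨⟨x.1, hx⟩, x.2, ?_⟩
                rw [show f ⟨x.1, hx⟩ = ⟨x.1, x.2⟩ from dif_pos x.2]
            rwa [himg] at hmap
          · intro z hz w hw he
            rw [show f z = ⟨z.1, hz⟩ from dif_pos hz,
              show f w = ⟨w.1, hw⟩ from dif_pos hw] at he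
            exact Subtype.ext (congrArg (fun t : ↥D => t.1) he)
          · intro z hz w hw
            rw [show f z = ⟨z.1, hz⟩ from dif_pos hz,
              show f w = ⟨w.1, hw⟩ from dif_pos hw]
            constructor
            · rintro (h' | h')
              · exact Or.inl ⟨z.2, w.2, h'⟩
              · exact Or.inr (Or.inr ⟨z.2, w.2, h'⟩)
            · rintro (⟨hz', hw', h'⟩ | (⟨hzC, -⟩ | ⟨hz', hw', h'⟩))
              · exact Or.inl h'
              · exact (z.2 hzC).elim
              · exact Or.inr h'
        rw [huniv]
        refine .dirJoin _ _ ?_ ⟨⟨c, hCsub hcC⟩, hcC⟩ hBne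
          (fun x hx y hy => hA'edge x hx y hy) fB ?_
        · rw [Set.disjoint_left]
          exact fun x hx hx' => hx' hx
        · intro a ha b hb
          refine ⟨Or.inr (Or.inl ⟨ha, hb⟩), ?_⟩
          rintro (⟨-, hy', -⟩ | (⟨hbC, -⟩ | ⟨-, hy', -⟩))
          · exact hy' ha
          · exact hb hbC
          · exact hy' ha
  · -- the component of v avoids C
    have hsub : ccG1 E0 Er v ⊆ Cᶜ := fun x hx hxC => hmeet ⟨x, hx, hxC⟩
    exact FitchSat.pullback (fun x : ↥(ccG1 E0 Er v) => (⟨x.1, hsub x.2⟩ : ↥(Cᶜ)))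
      (fun a b hab => Subtype.ext (congrArg (fun z : ↥(Cᶜ) => z.1) hab))
      (fun x y h' => h') (fun x y h' => h') (fun x y h' => h') hsat
/-- Consistency of the satisfiability rules:
(1) (S1) and (S2a) imply (S2b);
(2) (S1) and a witness of (S3a) imply that the complement of the witnessing component
is Fitch-satisfiable;
(3) if (S2a) holds and some component witnesses (S3a), then (S2b) holds iff the
complement of the witnessing component is Fitch-satisfiable. -/
theorem rules_consistent {V : Type*} [Fintype V] (E0 E1 Er : V → V → Prop)
    (h : IsPartialTuple E0 E1 Er) :
    (RuleS1 E1 Er → RuleS2a E0 Er → RuleS2b E0 E1 Er) ∧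
    (∀ c : V, RuleS1 E1 Er → WitnessS3a E0 E1 Er c → SatComplS3 E0 E1 Er c) ∧
    (∀ c : V, RuleS2a E0 Er → WitnessS3a E0 E1 Er c →
      (RuleS2b E0 E1 Er ↔ SatComplS3 E0 E1 Er c)) := by
  obtain ⟨i0V, i1V, irV, s0V, s1V, arV⟩ := h
  refine ⟨?_, ?_, ?_⟩
  · intro hS1 _ v
    exact trivialSat
      (fun x y hE he => i0V x.1 (by cases he; exact hE))
      (fun x y hE => hS1 x.1 y.1 (Or.inl hE))
      (fun x y hE => hS1 x.1 y.1 (Or.inr hE))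
  · intro c hS1 _
    exact trivialSat
      (fun x y hE he => i0V x.1 (by cases he; exact hE))
      (fun x y hE => hS1 x.1 y.1 (Or.inl hE))
      (fun x y hE => hS1 x.1 y.1 (Or.inr hE))
  · intro c _ hw
    constructor
    · intro h2b
      exact FitchSat.pullback Subtype.val Subtype.val_injective
        (fun _ _ h' => h') (fun _ _ h' => h') (fun _ _ h' => h')
        (glueSat E0 E1 Er h2b)
    · intro hsat
      exact s3_components E0 E1 Er ⟨i0V, i1V, irV, s0V, s1V, arV⟩ c hw hsat
end
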